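/- arXiv:1910.03674 — 12 statements merged into one kernel-verified Lean document; each statement's English description precedes it below -/
import Mathlib

section
/- Let A be an L-algebra and K ⊆ A a subset. Then the syntactic congruence σ_K is a congruence on A that saturates K, and it is the largest such: every congruence r on A that saturates K satisfies r a b → σ_K a b for all a, b ∈ A. -/
open FirstOrder Language Structure

/-- An elementary translation of an `L`-algebra `A`. -/
def IsElemTranslation (L : FirstOrder.Language) {A : Type*} [L.Structure A]
    (g : Function.End A) : Prop :=
  ∃ (n : ℕ) (f : L.Functions n) (i : Fin n) (v : Fin n → A),
    g = fun a => funMap f (Function.update v i a)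

/-- The translation monoid `M(A)`. -/
def translationMonoid (L : FirstOrder.Language) (A : Type*) [L.Structure A] :
    Submonoid (Function.End A) :=
  Submonoid.closure {g | IsElemTranslation L g}

/-- The syntactic congruence of `K ⊆ A`. -/
def syntCong (L : FirstOrder.Language) {A : Type*} [L.Structure A] (K : Set A)
    (a b : A) : Prop :=
  ∀ g ∈ translationMonoid L A, (g a ∈ K ↔ g b ∈ K)

/-! Any relation of the form `g a ∈ K ↔ g b ∈ K` for all `g` in a monoid of maps is an equivalence
stable under that monoid, and stability under the elementary translations already gives
compatibility with the operations, by changing one argument at a time. Conversely a congruence is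
preserved by every translation, so if it saturates `K` it can never separate `g a` from `g b`
with respect to `K`. -/

theorem Relation.reflTransGen_of_forall_update {ι α β : Type*} [Finite ι] [DecidableEq ι]
    {R : α → α → Prop} {r : β → β → Prop} (F : (ι → α) → β)
    (hF : ∀ v i a b, R a b → r (F (Function.update v i a)) (F (Function.update v i b)))
    {v w : ι → α} (hvw : ∀ i, R (v i) (w i)) : Relation.ReflTransGen r (F v) (F w) := by
  have := Fintype.ofFinite ι
  suffices ∀ s : Finset ι, Relation.ReflTransGen r (F v) (F (s.piecewise w v)) by
    simpa using this Finset.univ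
  intro s
  induction s using Finset.induction_on with
  | empty => simpa using Relation.ReflTransGen.refl
  | insert i s hi ih =>
    have hstep := hF (s.piecewise w v) i (v i) (w i) (hvw i)
    rw [← Finset.piecewise_eq_of_notMem s w v hi, Function.update_eq_self] at hstep
    rw [Finset.piecewise_insert]
    exact ih.tail hstep

section

variable {L : Language} {A : Type*} [L.Structure A]

theorem update_mem_translationMonoid {n : ℕ} (f : L.Functions n) (i : Fin n) (v : Fin n → A) :
    (fun a => funMap f (Function.update v i a) : Function.End A) ∈ translationMonoid L A :=
  Submonoid.subset_closure ⟨n, f, i, v, rfl⟩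

theorem syntCong_equivalence (K : Set A) : Equivalence (syntCong L K) where
  refl _ _ _ := Iff.rfl
  symm h g hg := (h g hg).symm
  trans h₁ h₂ g hg := (h₁ g hg).trans (h₂ g hg)

theorem syntCong.mem_iff {K : Set A} {a b : A} (h : syntCong L K a b) : a ∈ K ↔ b ∈ K :=
  h 1 (one_mem _)

theorem syntCong.map {K : Set A} {a b : A} (h : syntCong L K a b) {g : Function.End A}
    (hg : g ∈ translationMonoid L A) : syntCong L K (g a) (g b) :=
  fun g' hg' => h (g' * g) (mul_mem hg' hg)

theorem syntCong_funMap (K : Set A) {n : ℕ} (f : L.Functions n) {v w : Fin n → A}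
    (h : ∀ i, syntCong L K (v i) (w i)) : syntCong L K (funMap f v) (funMap f w) :=
  Relation.reflTransGen_le_of_equivalence_of_le (syntCong_equivalence K) le_rfl _ _ <|
    Relation.reflTransGen_of_forall_update (funMap f)
      (fun u i _ _ hab => hab.map (update_mem_translationMonoid f i u)) h

theorem map_rel_of_mem_translationMonoid {r : A → A → Prop} (hrefl : ∀ a, r a a)
    (hcong : ∀ (n : ℕ) (f : L.Functions n) (v w : Fin n → A),
      (∀ i, r (v i) (w i)) → r (funMap f v) (funMap f w))
    {g : Function.End A} (hg : g ∈ translationMonoid L A) {a b : A} (hab : r a b) :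
    r (g a) (g b) := by
  induction hg using Submonoid.closure_induction generalizing a b with
  | mem g hg =>
    obtain ⟨n, f, i, v, rfl⟩ := hg
    refine hcong n f _ _ fun j => ?_
    rcases eq_or_ne j i with rfl | hji
    · simpa using hab
    · simpa [Function.update_of_ne hji] using hrefl (v j)
  | one => exact hab
  | mul g₁ g₂ _ _ ih₁ ih₂ => exact ih₁ (ih₂ hab)

theorem syntCong_of_rel {K : Set A} {r : A → A → Prop} (hr : Equivalence r)
    (hcong : ∀ (n : ℕ) (f : L.Functions n) (v w : Fin n → A),
      (∀ i, r (v i) (w i)) → r (funMap f v) (funMap f w))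
    (hsat : ∀ a b : A, r a b → a ∈ K → b ∈ K) {a b : A} (hab : r a b) : syntCong L K a b :=
  fun _ hg => ⟨hsat _ _ (map_rel_of_mem_translationMonoid hr.refl hcong hg hab),
    hsat _ _ (map_rel_of_mem_translationMonoid hr.refl hcong hg (hr.symm hab))⟩

end

/-- The syntactic congruence `σ_K` is a congruence on `A` saturating `K`, and it is
the largest congruence on `A` that saturates `K`. -/
theorem syntCong_isLargest_congruence_saturating (L : FirstOrder.Language) {A : Type*}
    [L.Structure A] (K : Set A) :
    Equivalence (syntCong L K) ∧
    (∀ (n : ℕ) (f : L.Functions n) (v w : Fin n → A),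
        (∀ i, syntCong L K (v i) (w i)) → syntCong L K (funMap f v) (funMap f w)) ∧
    (∀ a b : A, syntCong L K a b → a ∈ K → b ∈ K) ∧
    (∀ r : A → A → Prop, Equivalence r →
        (∀ (n : ℕ) (f : L.Functions n) (v w : Fin n → A),
          (∀ i, r (v i) (w i)) → r (funMap f v) (funMap f w)) →
        (∀ a b : A, r a b → a ∈ K → b ∈ K) →
        ∀ a b : A, r a b → syntCong L K a b) :=
  ⟨syntCong_equivalence K, fun _ f _ _ => syntCong_funMap K f, fun _ _ h => h.mem_iff.1,
    fun _ hr hcong hsat _ _ => syntCong_of_rel hr hcong hsat⟩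
end

section
/- Let A be a topological L-algebra and let K ⊆ A be a clopen subset. Then the syntactic congruence σ_K is closed, i.e., the set {p : A × A | σ_K p.1 p.2} is a closed subset of A × A. -/
open FirstOrder Language Structure

/-! `σ_K` is the intersection, over the translations `g`, of the relations "`g a` and `g b` lie
on the same side of `K`". Each of these is closed: it is the preimage of the diagonal of `Bool`
under `(a, b) ↦ (1_K (g a), 1_K (g b))`, which is continuous since `K` is clopen and every
translation is continuous, being a composite of continuous elementary translations. -/

section TranslationMonoid

variable {L : FirstOrder.Language} {A : Type*} [TopologicalSpace A] [L.Structure A]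

theorem IsElemTranslation.continuous
    (hA : ∀ (n : ℕ) (f : L.Functions n), Continuous fun v : Fin n → A => funMap f v)
    {g : Function.End A} (hg : IsElemTranslation L g) : Continuous g := by
  obtain ⟨n, f, i, v, rfl⟩ := hg
  exact (hA n f).comp (continuous_const.update i continuous_id)

theorem continuous_of_mem_translationMonoid
    (hA : ∀ (n : ℕ) (f : L.Functions n), Continuous fun v : Fin n → A => funMap f v)
    {g : Function.End A} (hg : g ∈ translationMonoid L A) : Continuous g := by
  induction hg using Submonoid.closure_induction with
  | mem g hg => exact hg.continuous hA
  | one => exact continuous_id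
  | mul g h _ _ hg hh => exact hg.comp hh

end TranslationMonoid

theorem IsClopen.isClosed_setOf_mem_iff_mem {X Y : Type*} [TopologicalSpace X]
    [TopologicalSpace Y] {K : Set Y} (hK : IsClopen K) {g : X → Y} (hg : Continuous g) :
    IsClosed {p : X × X | g p.1 ∈ K ↔ g p.2 ∈ K} := by
  have hχ : Continuous (K.boolIndicator ∘ g) :=
    ((continuous_boolIndicator_iff_isClopen K).mpr hK).comp hg
  simpa only [Set.mem_iff_boolIndicator, Bool.coe_iff_coe, Function.comp_apply] using
    isClosed_eq (hχ.comp continuous_fst) (hχ.comp continuous_snd)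

/-- In a topological `L`-algebra, the syntactic congruence of a clopen set is closed. -/
theorem syntCong_isClosed_of_isClopen (L : FirstOrder.Language) {A : Type*}
    [TopologicalSpace A] [L.Structure A]
    (hA : ∀ (n : ℕ) (f : L.Functions n), Continuous fun v : Fin n → A => funMap f v)
    (K : Set A) (hK : IsClopen K) :
    IsClosed {p : A × A | syntCong L K p.1 p.2} := by
  have hσ : {p : A × A | syntCong L K p.1 p.2} =
      ⋂ g ∈ translationMonoid L A, {p : A × A | g p.1 ∈ K ↔ g p.2 ∈ K} := by
    ext p
    simp only [syntCong, Set.mem_ofPred_eq, Set.mem_iInter]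
  rw [hσ]
  exact isClosed_biInter fun g hg =>
    hK.isClosed_setOf_mem_iff_mem (continuous_of_mem_translationMonoid hA hg)
end

section
/- Let φ : A → B be a surjective L-homomorphism between L-algebras and let K ⊆ B. Then for all a, a' ∈ A one has σ_{φ⁻¹(K)} a a' if and only if σ_K (φ a) (φ a'); that is, the preimage under φ × φ of the syntactic congruence of K on B equals the syntactic congruence of φ⁻¹(K) on A. -/
open FirstOrder Language Structure

lemma push_translation (L : FirstOrder.Language) {A B : Type*}
    [L.Structure A] [L.Structure B] (φ : A →[L] B) :
    ∀ g ∈ translationMonoid L A, ∃ g' ∈ translationMonoid L B,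
      ∀ a : A, φ (g a) = g' (φ a) := by
  intro g hg
  induction hg using Submonoid.closure_induction with
  | mem g hg =>
    obtain ⟨n, f, i, v, rfl⟩ := hg
    refine ⟨fun b => funMap f (Function.update (φ ∘ v) i b),
      Submonoid.subset_closure ⟨n, f, i, φ ∘ v, rfl⟩, fun a => ?_⟩
    simpa [Function.comp_update] using φ.map_fun f (Function.update v i a)
  | one => exact ⟨1, one_mem _, fun a => rfl⟩
  | mul g₁ g₂ _ _ ih₁ ih₂ =>
    obtain ⟨g₁', hg₁', h₁⟩ := ih₁
    obtain ⟨g₂', hg₂', h₂⟩ := ih₂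
    refine ⟨g₁' * g₂', mul_mem hg₁' hg₂', fun a => ?_⟩
    show φ (g₁ (g₂ a)) = g₁' (g₂' (φ a))
    rw [h₁, h₂]

lemma pull_translation (L : FirstOrder.Language) {A B : Type*}
    [L.Structure A] [L.Structure B] (φ : A →[L] B) (hφ : Function.Surjective φ) :
    ∀ g' ∈ translationMonoid L B, ∃ g ∈ translationMonoid L A,
      ∀ a : A, φ (g a) = g' (φ a) := by
  intro g' hg'
  induction hg' using Submonoid.closure_induction with
  | mem g' hg' =>
    obtain ⟨n, f, i, w, rfl⟩ := hg'
    choose v hv using fun j => hφ (w j)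
    refine ⟨fun a => funMap f (Function.update v i a),
      Submonoid.subset_closure ⟨n, f, i, v, rfl⟩, fun a => ?_⟩
    have : φ ∘ v = w := funext hv
    have h := φ.map_fun f (Function.update v i a)
    simpa [Function.comp_update, this] using h
  | one => exact ⟨1, one_mem _, fun a => rfl⟩
  | mul g₁ g₂ _ _ ih₁ ih₂ =>
    obtain ⟨h₁, hh₁, e₁⟩ := ih₁
    obtain ⟨h₂, hh₂, e₂⟩ := ih₂
    refine ⟨h₁ * h₂, mul_mem hh₁ hh₂, fun a => ?_⟩
    show φ (h₁ (h₂ a)) = g₁ (g₂ (φ a))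
    rw [e₁, e₂]

/-- Syntactic congruences lift along surjective homomorphisms:
`(φ × φ)⁻¹ σ_K = σ_{φ⁻¹(K)}`. -/
theorem syntCong_preimage (L : FirstOrder.Language) {A B : Type*}
    [L.Structure A] [L.Structure B] (φ : A →[L] B) (hφ : Function.Surjective φ)
    (K : Set B) :
    ∀ a a' : A, syntCong L (⇑φ ⁻¹' K) a a' ↔ syntCong L K (φ a) (φ a') := by
  intro a a'
  constructor
  · intro h g' hg'
    obtain ⟨g, hg, e⟩ := pull_translation L φ hφ g' hg'
    rw [← e, ← e]
    exact h g hg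
  · intro h g hg
    obtain ⟨g', hg', e⟩ := push_translation L φ g hg
    simp only [Set.mem_preimage, e]
    exact h g' hg'
end

section
/- Let A be a profinite topological L-algebra, let B be a topological L-algebra whose underlying space is compact, Hausdorff and totally disconnected, and let φ : A → B be a surjective continuous L-homomorphism. Then B is residually finite, hence profinite. -/
open FirstOrder Language Structure

def ResiduallyFinite (L : FirstOrder.Language) (A : Type*) [TopologicalSpace A]
    [L.Structure A] : Prop :=
  ∀ a b : A, a ≠ b →
    ∃ (F : Type) (_ : Finite F) (iT : TopologicalSpace F) (iS : L.Structure F),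
      letI := iT; letI := iS;
      DiscreteTopology F ∧ ∃ φ : A →[L] F, Continuous (φ : A → F) ∧ φ a ≠ φ b

/-!
Separate `b₁ ≠ b₂` by a clopen `U ⊆ B`. The pairs `(a, a')` with `φ a ∈ U` and `φ a' ∉ U` form a
compact subset of `A × A` off the diagonal; since the kernels of continuous homomorphisms to finite
discrete algebras form a downward directed family of open congruences with trivial intersection,
one open congruence `S` separates all these pairs. The congruence `θ = ker φ ⊔ S` still never
relates `φ⁻¹ U` to `φ⁻¹ Uᶜ`, has open classes, and contains `ker φ`, so `B → A/θ` is a well-defined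
homomorphism onto a finite discrete algebra; it is continuous because `φ`, a continuous surjection
from a compact space onto a Hausdorff one, is a quotient map.
-/

namespace FirstOrder.Language

open Function

variable {L : Language} {M : Type*} [L.Structure M]

variable (L) in
def IsCongruence (s : Setoid M) : Prop :=
  ∀ ⦃n⦄ (f : L.Functions n) (x y : Fin n → M), (∀ i, s (x i) (y i)) → s (funMap f x) (funMap f y)

namespace IsCongruence

variable {r s : Setoid M}

theorem funMap_update (hs : IsCongruence L s) {n : ℕ} (f : L.Functions n) (x : Fin n → M)
    (i : Fin n) {u w : M} (h : s u w) :
    s (funMap f (update x i u)) (funMap f (update x i w)) :=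
  hs f _ _ fun j => by
    rcases eq_or_ne j i with rfl | hj
    · simpa using h
    · simp [update_of_ne hj]

theorem of_funMap_update
    (h : ∀ {n} (f : L.Functions n) (x : Fin n → M) (i : Fin n) (u w : M), s u w →
      s (funMap f (update x i u)) (funMap f (update x i w))) :
    IsCongruence L s := by
  intro n f x y hxy
  suffices ∀ T : Finset (Fin n), s (funMap f x) (funMap f (T.piecewise y x)) by
    simpa using this Finset.univ
  intro T
  induction T using Finset.induction_on with
  | empty => simp
  | insert i T hi ih =>
    refine s.trans ih ?_
    rw [Finset.piecewise_insert]
    conv_lhs => rw [← update_eq_self i (T.piecewise y x)]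
    rw [Finset.piecewise_eq_of_notMem _ _ _ hi]
    exact h f _ i _ _ (hxy i)

theorem sup (hr : IsCongruence L r) (hs : IsCongruence L s) : IsCongruence L (r ⊔ s) := by
  refine of_funMap_update fun f x i u w huw => ?_
  rw [Setoid.sup_eq_eqvGen] at huw ⊢
  induction huw with
  | rel u w h => exact .rel _ _ (h.imp (hr.funMap_update f x i) (hs.funMap_update f x i))
  | refl => exact .refl _
  | symm _ _ _ ih => exact .symm _ _ ih
  | trans _ _ _ _ _ ih₁ ih₂ => exact .trans _ _ _ ih₁ ih₂

theorem inf (hr : IsCongruence L r) (hs : IsCongruence L s) : IsCongruence L (r ⊓ s) :=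
  fun _ f x y hxy => ⟨hr f x y fun i => (hxy i).1, hs f x y fun i => (hxy i).2⟩

theorem top : IsCongruence L (⊤ : Setoid M) :=
  fun _ _ _ _ _ => trivial

/-- Relation symbols are interpreted as `True` on the quotient. -/
abbrev prestructure (hs : IsCongruence L s) : L.Prestructure s where
  toStructure := { funMap := funMap, RelMap := fun _ _ => True }
  fun_equiv x y hxy := hs _ x y hxy
  rel_equiv _ _ _ := rfl

end IsCongruence

theorem Hom.isCongruence_ker {N : Type*} [L.Structure N] (φ : M →[L] N) :
    IsCongruence L (Setoid.ker φ) := by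
  intro n f x y hxy
  change φ _ = φ _
  rw [φ.map_fun, φ.map_fun]
  exact congrArg _ (funext hxy)

end FirstOrder.Language

def DiscreteQuotient.ofSetoid {X : Type*} [TopologicalSpace X] (S : DiscreteQuotient X)
    (r : Setoid X) (h : S.toSetoid ≤ r) : DiscreteQuotient X where
  toSetoid := r
  isOpen_setOfPred_rel x := by
    convert S.isOpen_preimage (S.proj '' Set.ofPred (r x))
    refine (Set.subset_preimage_image _ _).antisymm ?_
    rintro y ⟨z, hz, hzy⟩
    exact r.trans hz (h (Quotient.exact hzy))

theorem ResiduallyFinite.exists_isCongruence_separating {L : Language} {A : Type*}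
    [TopologicalSpace A] [L.Structure A] (hres : ResiduallyFinite L A) {K : Set (A × A)}
    (hK : IsCompact K) (hK_offDiag : ∀ q ∈ K, q.1 ≠ q.2) :
    ∃ S : DiscreteQuotient A, IsCongruence L S.toSetoid ∧ ∀ q ∈ K, ¬ S.toSetoid q.1 q.2 := by
  let separated (S : {S : DiscreteQuotient A // IsCongruence L S.toSetoid}) : Set (A × A) :=
    {q | ¬ S.1.toSetoid q.1 q.2}
  have isOpen_separated S : IsOpen (separated S) := by
    have : separated S = Prod.map S.1.proj S.1.proj ⁻¹' (Set.diagonal _)ᶜ := by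
      ext q; exact Quotient.eq''.not.symm
    rw [this]
    exact (isOpen_discrete _).preimage (S.1.proj_continuous.prodMap S.1.proj_continuous)
  have cover : K ⊆ ⋃ S, separated S := by
    intro q hq
    obtain ⟨F, _, _, _, _, ψ, hψ, hne⟩ := hres q.1 q.2 (hK_offDiag q hq)
    let Sψ := LocallyConstant.discreteQuotient ⟨ψ, (IsLocallyConstant.iff_continuous ψ).2 hψ⟩
    exact Set.mem_iUnion.2 ⟨⟨Sψ, ψ.isCongruence_ker⟩, hne⟩
  have directed : Directed (· ⊆ ·) separated := fun S T =>
    ⟨⟨S.1 ⊓ T.1, S.2.inf T.2⟩, fun _ hq h => hq h.1, fun _ hq h => hq h.2⟩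
  have : Nonempty {S : DiscreteQuotient A // IsCongruence L S.toSetoid} := ⟨⟨⊤, .top⟩⟩
  obtain ⟨S, hS⟩ := hK.elim_directed_cover separated isOpen_separated cover directed
  exact ⟨S.1, S.2, hS⟩

theorem exists_continuous_hom_comp_eq_proj {L : Language} {A B : Type*}
    [TopologicalSpace A] [L.Structure A] [CompactSpace A]
    [TopologicalSpace B] [L.Structure B] [T2Space B]
    {φ : A →[L] B} (hc : Continuous φ) (hs : Function.Surjective φ)
    (D : DiscreteQuotient A) (hD : IsCongruence L D.toSetoid) (hφD : Setoid.ker φ ≤ D.toSetoid) :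
    letI := hD.prestructure
    ∃ χ : B →[L] D, Continuous χ ∧ ∀ a, χ (φ a) = D.proj a := by
  let := hD.prestructure
  have proj_surjInv a : D.proj (Function.surjInv hs (φ a)) = D.proj a :=
    Quotient.sound (hφD (Function.surjInv_eq hs _))
  refine ⟨⟨D.proj ∘ Function.surjInv hs, fun f x => ?_, fun r x _ => ?_⟩, ?_, proj_surjInv⟩
  · have hx : x = φ ∘ (Function.surjInv hs ∘ x) := funext fun i => (Function.surjInv_eq hs _).symm
    conv_lhs => rw [hx, Function.comp_apply, ← φ.map_fun, proj_surjInv]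
    exact (funMap_quotient_mk' _ f _).symm
  · exact (relMap_quotient_mk' _ r _).2 trivial
  · rw [(Topology.IsQuotientMap.of_surjective_continuous hs hc).continuous_iff]
    convert D.proj_continuous using 1
    exact funext proj_surjInv

theorem exists_finite_type_separating_hom {L : Language} {B F : Type*}
    [TopologicalSpace B] [L.Structure B]
    [Finite F] [TopologicalSpace F] [DiscreteTopology F] [L.Structure F]
    (χ : B →[L] F) (hχ : Continuous χ) {b₁ b₂ : B} (h : χ b₁ ≠ χ b₂) :
    ∃ (F' : Type) (_ : Finite F') (iT : TopologicalSpace F') (iS : L.Structure F'),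
      letI := iT; letI := iS;
      DiscreteTopology F' ∧ ∃ ψ : B →[L] F', Continuous ψ ∧ ψ b₁ ≠ ψ b₂ := by
  obtain ⟨m, ⟨e⟩⟩ := Finite.exists_equiv_fin F
  let := e.inducedStructure (L := L)
  refine ⟨Fin m, inferInstance, inferInstance, e.inducedStructure, inferInstance,
    (e.inducedStructureEquiv (L := L)).toHom.comp χ, ?_, ?_⟩
  · exact (continuous_of_discreteTopology (f := e)).comp hχ
  · simpa using h

theorem residuallyFinite_of_surjective_continuous_hom_general (L : FirstOrder.Language)
    {A B : Type*}
    [TopologicalSpace A] [L.Structure A]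
    [CompactSpace A]
    [TopologicalSpace B] [L.Structure B]
    [CompactSpace B] [T2Space B] [TotallyDisconnectedSpace B]
    (hres : ResiduallyFinite L A)
    (φ : A →[L] B) (hc : Continuous (φ : A → B)) (hs : Function.Surjective φ) :
    ResiduallyFinite L B := by
  intro b₁ b₂ hb
  obtain ⟨U, hU, hb₁, hb₂⟩ := exists_isClopen_of_totally_separated hb
  obtain ⟨S, hS, hSU⟩ := hres.exists_isCongruence_separating
    ((hU.1.preimage hc).isCompact.prod (hU.compl.1.preimage hc).isCompact)
    fun q hq h => hq.2 (h ▸ hq.1)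
  let D := S.ofSetoid (Setoid.ker φ ⊔ S.toSetoid) le_sup_right
  have hDU : D.toSetoid ≤ Setoid.ker (φ · ∈ U) := by
    refine sup_le (fun a a' h => congrArg (· ∈ U) h) fun a a' h => eq_iff_iff.2 ⟨?_, ?_⟩
    · exact fun ha => by_contra fun ha' => hSU (a, a') ⟨ha, ha'⟩ h
    · exact fun ha' => by_contra fun ha => hSU (a', a) ⟨ha', ha⟩ (S.symm _ _ h)
  have hD : IsCongruence L D.toSetoid := φ.isCongruence_ker.sup hS
  let := hD.prestructure
  obtain ⟨χ, hχ, hχφ⟩ := exists_continuous_hom_comp_eq_proj hc hs D hD le_sup_left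
  obtain ⟨a₁, rfl⟩ := hs b₁
  obtain ⟨a₂, rfl⟩ := hs b₂
  refine exists_finite_type_separating_hom χ hχ fun h => hb₂ ?_
  rw [hχφ, hχφ] at h
  exact (eq_iff_iff.1 (hDU (Quotient.exact h))).1 hb₁

/-- A Stone continuous homomorphic image of a profinite algebra is profinite. -/
theorem residuallyFinite_of_surjective_continuous_hom (L : FirstOrder.Language)
    {A B : Type*}
    [TopologicalSpace A] [L.Structure A]
    [CompactSpace A] [T2Space A] [TotallyDisconnectedSpace A]
    [TopologicalSpace B] [L.Structure B]
    [CompactSpace B] [T2Space B] [TotallyDisconnectedSpace B]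
    (hA : ∀ (n : ℕ) (f : L.Functions n), Continuous fun v : Fin n → A => funMap f v)
    (hB : ∀ (n : ℕ) (f : L.Functions n), Continuous fun v : Fin n → B => funMap f v)
    (hres : ResiduallyFinite L A)
    (φ : A →[L] B) (hc : Continuous (φ : A → B)) (hs : Function.Surjective φ) :
    ResiduallyFinite L B :=
  residuallyFinite_of_surjective_continuous_hom_general L hres φ hc hs
end

section
/- Let A be a Stone topological L-algebra. Then A is residually finite (i.e., profinite) if and only if for every clopen subset K ⊆ A there exist a finite L-algebra F with the discrete topology and a continuous L-homomorphism φ : A → F such that φ⁻¹(φ '' K) = K. -/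
open FirstOrder Language Structure

namespace FirstOrder.Language

variable {L : Language}

instance Structure.unit : L.Structure Unit where
  funMap _ _ := ()
  RelMap _ _ := True

instance Structure.prod {M N : Type*} [L.Structure M] [L.Structure N] : L.Structure (M × N) where
  funMap f v := (funMap f (Prod.fst ∘ v), funMap f (Prod.snd ∘ v))
  RelMap r v := RelMap r (Prod.fst ∘ v) ∧ RelMap r (Prod.snd ∘ v)

namespace Hom

variable {A M N : Type*} [L.Structure A] [L.Structure M] [L.Structure N]

def toUnit : A →[L] Unit where
  toFun _ := ()
  map_rel' _ _ _ := trivial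

def prod (φ : A →[L] M) (ψ : A →[L] N) : A →[L] M × N where
  toFun x := (φ x, ψ x)
  map_fun' f x := by
    simp only [funMap, Prod.mk.injEq]
    exact ⟨φ.map_fun f x, ψ.map_fun f x⟩
  map_rel' r x h := ⟨φ.map_rel r x h, ψ.map_rel r x h⟩

@[simp]
theorem prod_apply (φ : A →[L] M) (ψ : A →[L] N) (x : A) : φ.prod ψ x = (φ x, ψ x) :=
  rfl

end Hom

/-- Bundles the existential data in `ResiduallyFinite`. -/
structure FiniteDiscreteHom (L : Language) (A : Type*) [TopologicalSpace A] [L.Structure A] where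
  F : Type
  [finite : Finite F]
  [topologicalSpace : TopologicalSpace F]
  [discreteTopology : DiscreteTopology F]
  [str : L.Structure F]
  toHom : A →[L] F
  continuous : Continuous toHom

namespace FiniteDiscreteHom

attribute [instance] finite topologicalSpace discreteTopology str

variable {A : Type*} [TopologicalSpace A] [L.Structure A]

instance : CoeFun (FiniteDiscreteHom L A) (fun q => A → q.F) :=
  ⟨fun q => q.toHom⟩

theorem exists_iff {P : ∀ {F : Type}, (A → F) → Prop} :
    (∃ q : FiniteDiscreteHom L A, P q) ↔
      ∃ (F : Type) (_ : Finite F) (iT : TopologicalSpace F) (iS : L.Structure F),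
        letI := iT; letI := iS;
        DiscreteTopology F ∧ ∃ φ : A →[L] F, Continuous (φ : A → F) ∧ P φ := by
  constructor
  · rintro ⟨q, hq⟩
    exact ⟨q.F, q.finite, q.topologicalSpace, q.str, q.discreteTopology, q.toHom, q.continuous,
      hq⟩
  · rintro ⟨F, _, _, _, _, φ, hφ, hP⟩
    exact ⟨⟨F, φ, hφ⟩, hP⟩

theorem residuallyFinite_iff :
    ResiduallyFinite L A ↔ ∀ a b : A, a ≠ b → ∃ q : FiniteDiscreteHom L A, q a ≠ q b :=
  forall₂_congr fun a b =>
    imp_congr_right fun _ => (exists_iff (P := fun φ => φ a ≠ φ b)).symm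

theorem exists_preimage_image_eq_iff (K : Set A) :
    (∃ q : FiniteDiscreteHom L A, q ⁻¹' (q '' K) = K) ↔
      ∃ (F : Type) (_ : Finite F) (iT : TopologicalSpace F) (iS : L.Structure F),
        letI := iT; letI := iS;
        DiscreteTopology F ∧ ∃ φ : A →[L] F, Continuous (φ : A → F) ∧
          ⇑φ ⁻¹' (⇑φ '' K) = K :=
  exists_iff (P := fun φ => φ ⁻¹' (φ '' K) = K)

def unit : FiniteDiscreteHom L A :=
  ⟨Unit, Hom.toUnit, continuous_const⟩

def prod (q r : FiniteDiscreteHom L A) : FiniteDiscreteHom L A :=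
  ⟨q.F × r.F, q.toHom.prod r.toHom, q.continuous.prodMk r.continuous⟩

@[simp]
theorem prod_apply (q r : FiniteDiscreteHom L A) (x : A) : q.prod r x = (q x, r x) :=
  rfl

theorem exists_refines_of_finset {ι : Type*} (s : Finset ι) (q : ι → FiniteDiscreteHom L A) :
    ∃ r : FiniteDiscreteHom L A, ∀ i ∈ s, ∀ x y, r x = r y → q i x = q i y := by
  classical
  induction s using Finset.induction_on with
  | empty => exact ⟨unit, by simp⟩
  | insert i s _ ih =>
    obtain ⟨r, hr⟩ := ih
    refine ⟨(q i).prod r, ?_⟩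
    simp only [Finset.mem_insert, forall_eq_or_imp, prod_apply]
    exact ⟨fun x y hxy => congrArg Prod.fst hxy,
      fun j hj x y hxy => hr j hj x y (congrArg Prod.snd hxy)⟩

theorem exists_preimage_image_eq_of_separating [CompactSpace A]
    (h : ∀ a b : A, a ≠ b → ∃ q : FiniteDiscreteHom L A, q a ≠ q b) {K : Set A}
    (hK : IsClopen K) : ∃ q : FiniteDiscreteHom L A, q ⁻¹' (q '' K) = K := by
  have hsep (p : A × A) : ∃ q : FiniteDiscreteHom L A, p.1 ≠ p.2 → q p.1 ≠ q p.2 := by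
    by_cases hp : p.1 = p.2
    exacts [⟨unit, (absurd hp ·)⟩, (h _ _ hp).imp fun _ hq _ => hq]
  choose q hq using hsep
  have hcompact : IsCompact (K ×ˢ Kᶜ) :=
    hK.isClosed.isCompact.prod hK.isOpen.isClosed_compl.isCompact
  obtain ⟨s, hs⟩ := hcompact.elim_finite_subcover (fun p => {x : A × A | q p x.1 ≠ q p x.2})
    (fun p => isOpen_ne_fun ((q p).continuous.comp continuous_fst)
      ((q p).continuous.comp continuous_snd))
    (fun x hx => Set.mem_iUnion.2 ⟨x, hq x (ne_of_mem_of_not_mem hx.1 hx.2)⟩)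
  obtain ⟨r, hr⟩ := exists_refines_of_finset s q
  refine ⟨r, (Set.subset_preimage_image _ _).antisymm' ?_⟩
  rintro y ⟨x, hxK, hxy⟩
  by_contra hyK
  obtain ⟨p, hps, hp⟩ := Set.mem_iUnion₂.1 (hs (Set.mk_mem_prod hxK hyK))
  exact hp (hr p hps x y hxy)

theorem exists_ne_of_forall_isClopen [TotallySeparatedSpace A]
    (h : ∀ K : Set A, IsClopen K → ∃ q : FiniteDiscreteHom L A, q ⁻¹' (q '' K) = K)
    {a b : A} (hab : a ≠ b) : ∃ q : FiniteDiscreteHom L A, q a ≠ q b := by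
  obtain ⟨K, hK, haK, hbK⟩ := exists_isClopen_of_totally_separated hab
  obtain ⟨q, hq⟩ := h K hK
  refine ⟨q, fun hqab => hbK ?_⟩
  rw [← hq]
  exact ⟨a, haK, hqab⟩

end FiniteDiscreteHom

end FirstOrder.Language

theorem residuallyFinite_iff_clopen_recognized_general (L : FirstOrder.Language) {A : Type*}
    [TopologicalSpace A] [L.Structure A]
    [CompactSpace A] [T2Space A] [TotallyDisconnectedSpace A] :
    ResiduallyFinite L A ↔
      ∀ K : Set A, IsClopen K →
        ∃ (F : Type) (_ : Finite F) (iT : TopologicalSpace F) (iS : L.Structure F),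
          letI := iT; letI := iS;
          DiscreteTopology F ∧ ∃ φ : A →[L] F, Continuous (φ : A → F) ∧
            ⇑φ ⁻¹' (⇑φ '' K) = K := by
  rw [FiniteDiscreteHom.residuallyFinite_iff]
  simp only [← FiniteDiscreteHom.exists_preimage_image_eq_iff]
  exact ⟨fun h K hK => FiniteDiscreteHom.exists_preimage_image_eq_of_separating h hK,
    fun h a b hab => FiniteDiscreteHom.exists_ne_of_forall_isClopen h hab⟩

/-- A Stone topological `L`-algebra is profinite iff every clopen subset is recognized
by a continuous homomorphism onto a finite algebra. -/
theorem residuallyFinite_iff_clopen_recognized (L : FirstOrder.Language) {A : Type*}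
    [TopologicalSpace A] [L.Structure A]
    [CompactSpace A] [T2Space A] [TotallyDisconnectedSpace A]
    (hA : ∀ (n : ℕ) (f : L.Functions n), Continuous fun v : Fin n → A => funMap f v) :
    ResiduallyFinite L A ↔
      ∀ K : Set A, IsClopen K →
        ∃ (F : Type) (_ : Finite F) (iT : TopologicalSpace F) (iS : L.Structure F),
          letI := iT; letI := iS;
          DiscreteTopology F ∧ ∃ φ : A →[L] F, Continuous (φ : A → F) ∧
            ⇑φ ⁻¹' (⇑φ '' K) = K :=
  residuallyFinite_iff_clopen_recognized_general L
end

section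
/- Let A be a compact Hausdorff totally disconnected topological space. Then for all clopen subsets K, L ⊆ A the set [K, L] = {f : C(A, A) | f '' K ⊆ L} is a clopen subset of C(A, A) in the compact-open topology, and consequently the space C(A, A) is totally separated. -/
namespace ContinuousMap

variable {X Y : Type*} [TopologicalSpace X] [TopologicalSpace Y]

theorem isClopen_setOf_image_subset {K : Set X} {L : Set Y} (hK : IsCompact K)
    (hL : IsClopen L) : IsClopen {f : C(X, Y) | f '' K ⊆ L} := by
  simpa only [← Set.mapsTo_iff_image_subset] using isClopen_setOfPred_mapsTo hK hL

instance instTotallySeparatedSpace [TotallySeparatedSpace Y] :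
    TotallySeparatedSpace C(X, Y) := by
  refine totallySeparatedSpace_iff_exists_isClopen.2 fun f g hfg => ?_
  obtain ⟨x, hx⟩ := DFunLike.ne_iff.1 hfg
  obtain ⟨U, hU, hfU, hgU⟩ := exists_isClopen_of_totally_separated hx
  exact ⟨(fun h : C(X, Y) => h x) ⁻¹' U, hU.preimage (continuous_eval_const x), hfU, hgU⟩

end ContinuousMap

/-- For a Stone space `A`, the sets `[K, L] = {f | f '' K ⊆ L}` with `K`, `L` clopen are
clopen in `C(A, A)` with the compact-open topology, and `C(A, A)` is totally separated. -/
theorem isClopen_compactOpen_and_totallySeparated {A : Type*} [TopologicalSpace A]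
    [CompactSpace A] [T2Space A] [TotallyDisconnectedSpace A] :
    (∀ K L : Set A, IsClopen K → IsClopen L →
        IsClopen {f : C(A, A) | ⇑f '' K ⊆ L}) ∧
      TotallySeparatedSpace C(A, A) :=
  -- `A` is totally separated, being compact, Hausdorff and totally disconnected.
  ⟨fun _ _ hK hL => ContinuousMap.isClopen_setOf_image_subset hK.isClosed.isCompact hL,
    inferInstance⟩
end

section
/- Let X be a compact Hausdorff totally disconnected topological space and let s be an equivalence relation (a Setoid) on X such that {p : X × X | s relates p.1 and p.2} is closed in X × X. If Quotient s is countable, then Quotient s (with the quotient topology) is compact, Hausdorff and totally disconnected. -/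
open Topology


/-- A countable quotient of a Stone space by a closed equivalence relation is a
Stone space. -/
theorem quotient_stone_of_countable {X : Type*} [TopologicalSpace X] [CompactSpace X]
    [T2Space X] [TotallyDisconnectedSpace X] (s : Setoid X)
    (hclosed : IsClosed {p : X × X | s.r p.1 p.2}) (hcount : Countable (Quotient s)) :
    CompactSpace (Quotient s) ∧ T2Space (Quotient s) ∧
      TotallyDisconnectedSpace (Quotient s) := by
  have hq : IsQuotientMap (Quotient.mk s) := isQuotientMap_quot_mk
  -- the quotient map is a closed map
  have hcm : IsClosedMap (Quotient.mk s) := by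
    intro C hC
    rw [← hq.isClosed_preimage]
    have hsat : Quotient.mk s ⁻¹' (Quotient.mk s '' C) =
        Prod.fst '' ({p : X × X | s.r p.1 p.2} ∩ Set.univ ×ˢ C) := by
      ext x
      simp only [Set.mem_preimage, Set.mem_image, Set.mem_inter_iff, Set.mem_setOf_eq,
        Set.mem_prod, Set.mem_univ, true_and, Prod.exists]
      constructor
      · rintro ⟨y, hy, hxy⟩
        exact ⟨x, y, ⟨Quotient.exact hxy.symm, hy⟩, rfl⟩
      · rintro ⟨a, b, ⟨hab, hb⟩, rfl⟩
        exact ⟨b, hb, (Quotient.sound hab).symm⟩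
    rw [hsat]
    exact (((hclosed.inter (isClosed_univ.prod hC)).isCompact).image continuous_fst).isClosed
  -- T1
  have hT1 : T1Space (Quotient s) := by
    constructor
    intro q
    induction q using Quotient.ind with
    | _ x =>
      rw [← hq.isClosed_preimage]
      have : Quotient.mk s ⁻¹' {Quotient.mk s x} = (fun y => (y, x)) ⁻¹' {p : X × X | s.r p.1 p.2} := by
        ext y
        simp only [Set.mem_preimage, Set.mem_singleton_iff, Set.mem_setOf_eq]
        exact ⟨fun h => Quotient.exact h, fun h => Quotient.sound h⟩
      rw [this]
      exact hclosed.preimage (Continuous.prodMk_left x)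
  -- Normal
  have hnorm : NormalSpace (Quotient s) := by
    constructor
    intro A B hA hB hAB
    obtain ⟨U, V, hU, hV, hAU, hBV, hUV⟩ :=
      normal_separation (hA.preimage hq.continuous) (hB.preimage hq.continuous)
        (hAB.preimage (Quotient.mk s))
    refine ⟨(Quotient.mk s '' Uᶜ)ᶜ, (Quotient.mk s '' Vᶜ)ᶜ,
      (hcm _ hU.isClosed_compl).isOpen_compl, (hcm _ hV.isClosed_compl).isOpen_compl,
      ?_, ?_, ?_⟩
    · intro a ha
      rintro ⟨y, hy, rfl⟩
      exact hy (hAU ha)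
    · intro b hb
      rintro ⟨y, hy, rfl⟩
      exact hy (hBV hb)
    · rw [Set.disjoint_left]
      rintro c hcU hcV
      obtain ⟨x, rfl⟩ := hq.surjective c
      have hxU : x ∈ U := by
        by_contra hx
        exact hcU ⟨x, hx, rfl⟩
      have hxV : x ∈ V := by
        by_contra hx
        exact hcV ⟨x, hx, rfl⟩
      exact Set.disjoint_left.mp hUV hxU hxV
  haveI := hT1
  haveI := hnorm
  haveI : T2Space (Quotient s) := inferInstance
  refine ⟨Quotient.compactSpace, inferInstance, ?_⟩
  constructor
  intro t _ ht a ha b hb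
  by_contra hab
  obtain ⟨f, hf0, hf1, hf01⟩ := exists_continuous_zero_one_of_isClosed
    (isClosed_singleton (x := a)) (isClosed_singleton (x := b))
    (Set.disjoint_singleton.mpr hab)
  have himage : IsPreconnected (f '' t) := ht.image f f.continuous.continuousOn
  have h0 : (0 : ℝ) ∈ f '' t := ⟨a, ha, hf0 rfl⟩
  have h1 : (1 : ℝ) ∈ f '' t := ⟨b, hb, hf1 rfl⟩
  have hIcc : Set.Icc (0 : ℝ) 1 ⊆ f '' t := himage.Icc_subset h0 h1
  have hcnt : (Set.Icc (0 : ℝ) 1).Countable :=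
    ((Set.to_countable t).image f).mono hIcc
  have := hcnt.to_subtype
  have hle : (Cardinal.mk (Set.Icc (0 : ℝ) 1)) ≤ Cardinal.aleph0 := Cardinal.mk_le_aleph0
  rw [Cardinal.mk_Icc_real one_pos] at hle
  exact absurd hle (not_le.mpr Cardinal.aleph0_lt_continuum)
end

section
/- Let A be a profinite topological L-algebra, let B be a topological L-algebra, and let φ : A → B be a surjective continuous L-homomorphism that is a topological quotient map and whose kernel {p : A × A | φ p.1 = φ p.2} is closed in A × A. If B is countable, then B is compact, Hausdorff, totally disconnected and residually finite, hence profinite. -/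
open FirstOrder Language Structure

/-!
`B` is compact as a continuous image of `A`. The closed kernel makes `φ` a proper map, so
`φ × φ` is closed and the diagonal of `B`, the image of the kernel, is closed. A countable
compact Hausdorff space is totally disconnected.

For residual finiteness, a congruence `S` of `A` with clopen classes pushes forward to the
congruence on `B` generated by `(φ × φ) '' S`; its classes are clopen, hence finitely many. If no
such pushforward separated `b ≠ b'`, the closed set `C` of points linked to `b` by all of them
would contain `b'`. Being countable and compact, `C` has an isolated point `c`, cut out of `C` by
a clopen `W`. By compactness of `A × A` some such `S` refines "same side of `φ⁻¹ W`", so its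
pushforward never leaves `W` and cannot link `c` to another point of `C`.
-/

open Topology Relation Function

section

variable {L : FirstOrder.Language}

def IsCompatible (L : FirstOrder.Language) {M : Type*} [L.Structure M] (r : M → M → Prop) :
    Prop :=
  ∀ ⦃n⦄ (f : L.Functions n) ⦃v w : Fin n → M⦄,
    (∀ i, r (v i) (w i)) → r (funMap f v) (funMap f w)

section Compatible

variable {M N : Type*} [L.Structure M] [L.Structure N] {r : M → M → Prop}

theorem isCompatible_ker (ψ : M →[L] N) : IsCompatible L (Setoid.ker ψ) := by
  intro n f v w h
  change ψ _ = ψ _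
  rw [ψ.map_fun, ψ.map_fun]
  exact congrArg _ (funext h)

theorem IsCompatible.eqvGen_funMap_update (hrefl : ∀ x, r x x) (hr : IsCompatible L r)
    {n : ℕ} (f : L.Functions n) (u : Fin n → M) (i : Fin n) {x y : M} (h : EqvGen r x y) :
    EqvGen r (funMap f (update u i x)) (funMap f (update u i y)) := by
  induction h with
  | rel x y hxy =>
    refine .rel _ _ (hr f fun j => ?_)
    rcases eq_or_ne j i with rfl | hj
    · simpa using hxy
    · simpa [hj] using hrefl (u j)
  | refl x => exact .refl _
  | symm x y _ ih => exact .symm _ _ ih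
  | trans x y z _ _ ih₁ ih₂ => exact .trans _ _ _ ih₁ ih₂

theorem IsCompatible.eqvGen (hrefl : ∀ x, r x x) (hr : IsCompatible L r) :
    IsCompatible L (EqvGen r) := by
  classical
  intro n f v w h
  suffices ∀ s : Finset (Fin n), EqvGen r (funMap f v) (funMap f (s.piecewise w v)) by
    simpa using this Finset.univ
  intro s
  induction s using Finset.induction_on with
  | empty => simpa using EqvGen.refl _
  | insert i s hi ih =>
    refine .trans _ _ _ ih ?_
    rw [Finset.piecewise_insert]
    convert hr.eqvGen_funMap_update hrefl f (s.piecewise w v) i (h i)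
    simp [hi]

theorem IsCompatible.setoidMap {s : Setoid M} (hs : IsCompatible L s) {φ : M →[L] N}
    (hφ : Surjective φ) : IsCompatible L (s.map φ) := by
  refine IsCompatible.eqvGen (fun y => ?_) fun n f v w h => ?_
  · obtain ⟨x, rfl⟩ := hφ y
    exact ⟨x, x, s.refl x, rfl, rfl⟩
  · choose x y hxy hx hy using h
    exact ⟨funMap f x, funMap f y, hs f hxy, (φ.map_fun f x).trans (congrArg _ (funext hx)),
      (φ.map_fun f y).trans (congrArg _ (funext hy))⟩

end Compatible

namespace DiscreteQuotient

variable {X Y : Type*} [TopologicalSpace X] [TopologicalSpace Y]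

theorem isClopen_graph (S : DiscreteQuotient X) :
    IsClopen {p : X × X | S.toSetoid p.1 p.2} := by
  have : {p : X × X | S.toSetoid p.1 p.2} = Prod.map S.proj S.proj ⁻¹' Set.diagonal S := by
    ext p
    exact Quotient.eq''.symm
  rw [this]
  exact (isClopen_discrete _).preimage (S.proj_continuous.prodMap S.proj_continuous)

def pushforward (S : DiscreteQuotient X) {f : X → Y} (hf : IsQuotientMap f) :
    DiscreteQuotient Y where
  toSetoid := S.toSetoid.map f
  isOpen_setOfPred_rel y := by
    rw [← hf.isOpen_preimage, isOpen_iff_mem_nhds]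
    intro x hx
    refine Filter.mem_of_superset ((S.isOpen_setOfPred_rel x).mem_nhds (S.refl x)) ?_
    exact fun x' hx' => EqvGen.trans _ _ _ hx (EqvGen.rel _ _ ⟨x, x', hx', rfl, rfl⟩)

theorem pushforward_le {S : DiscreteQuotient X} {f : X → Y} (hf : IsQuotientMap f)
    {T : DiscreteQuotient Y} (h : S ≤ T.comap ⟨f, hf.continuous⟩) : S.pushforward hf ≤ T :=
  Setoid.eqvGen_le fun _ _ ⟨_, _, hxx', hx, hx'⟩ => hx ▸ hx' ▸ h hxx'

end DiscreteQuotient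

section Topology

variable {A B : Type*} [TopologicalSpace A] [TopologicalSpace B]

theorem Topology.IsQuotientMap.isClosedMap_of_isClosed_ker [CompactSpace A] [T2Space A]
    {φ : A → B} (hq : IsQuotientMap φ) (hker : IsClosed {p : A × A | φ p.1 = φ p.2}) :
    IsClosedMap φ := by
  intro C hC
  have hsat :
      φ ⁻¹' (φ '' C) = Prod.fst '' ({p : A × A | φ p.1 = φ p.2} ∩ Set.univ ×ˢ C) := by
    ext x
    constructor
    · rintro ⟨y, hy, hxy⟩
      exact ⟨(x, y), ⟨hxy.symm, trivial, hy⟩, rfl⟩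
    · rintro ⟨⟨_, y⟩, ⟨hxy, -, hy⟩, rfl⟩
      exact ⟨y, hy, hxy.symm⟩
  rw [← hq.isClosed_preimage, hsat]
  exact ((hker.inter (isClosed_univ.prod hC)).isCompact.image continuous_fst).isClosed

theorem Topology.IsQuotientMap.t2Space_of_isClosed_ker [CompactSpace A] [T2Space A]
    {φ : A → B} (hq : IsQuotientMap φ) (hker : IsClosed {p : A × A | φ p.1 = φ p.2}) :
    T2Space B := by
  have hclosed := hq.isClosedMap_of_isClosed_ker hker
  have hproper : IsProperMap φ := by
    refine isProperMap_iff_isClosedMap_and_compact_fibers.2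
      ⟨hq.continuous, hclosed, fun b => ?_⟩
    obtain ⟨a, rfl⟩ := hq.surjective b
    rw [← Set.image_singleton]
    exact ((hclosed _ isClosed_singleton).preimage hq.continuous).isCompact
  have hdiag : Prod.map φ φ '' {p : A × A | φ p.1 = φ p.2} = Set.diagonal B := by
    ext q
    constructor
    · rintro ⟨p, hp, rfl⟩
      exact hp
    · intro (hq' : q.1 = q.2)
      obtain ⟨a, ha⟩ := hq.surjective q.1
      exact ⟨(a, a), rfl, Prod.ext ha (ha.trans hq')⟩
  rw [t2_iff_isClosed_diagonal, ← hdiag]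
  exact (hproper.prodMap hproper).isClosedMap _ hker

theorem IsClosed.exists_isClopen_inter_eq_singleton [CompactSpace A] [T2Space A]
    [TotallyDisconnectedSpace A] [Countable A] {C : Set A} (hC : IsClosed C) (hne : C.Nonempty) :
    ∃ c ∈ C, ∃ W : Set A, IsClopen W ∧ W ∩ C = {c} := by
  have : CompactSpace C := isCompact_iff_compactSpace.1 hC.isCompact
  have : Nonempty C := hne.to_subtype
  obtain ⟨c, hc⟩ := nonempty_interior_of_iUnion_of_closed (fun c : C => isClosed_singleton)
    (Set.iUnion_of_singleton C)
  have hopen : IsOpen ({c} : Set C) :=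
    hc.subset_singleton_iff.1 interior_subset ▸ isOpen_interior
  obtain ⟨V, hV, hVc⟩ := isOpen_induced_iff.1 hopen
  obtain ⟨W, hW, hcW, hWV⟩ := compact_exists_isClopen_in_isOpen hV (hVc.ge rfl : c ∈ _)
  refine ⟨c, c.2, W, hW, Set.Subset.antisymm (fun d ⟨hdW, hdC⟩ => ?_) ?_⟩
  · exact congrArg Subtype.val (hVc.le (hWV hdW : (⟨d, hdC⟩ : C) ∈ Subtype.val ⁻¹' V))
  · exact Set.singleton_subset_iff.2 ⟨hcW, c.2⟩

end Topology

section ResiduallyFinite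

variable {X : Type*} [TopologicalSpace X] [L.Structure X]

theorem exists_isCompatible_le_of_residuallyFinite [CompactSpace X]
    (hres : ResiduallyFinite L X) (T : DiscreteQuotient X) :
    ∃ S : DiscreteQuotient X, IsCompatible L S.toSetoid ∧ S ≤ T := by
  let ι := {S : DiscreteQuotient X // IsCompatible L S.toSetoid}
  have : Nonempty ι := ⟨⟨⊤, fun _ _ _ _ _ => trivial⟩⟩
  have hdir : Directed (· ⊇ ·) fun S : ι => {p : X × X | S.1.toSetoid p.1 p.2} :=
    fun S S' =>
      ⟨⟨S.1 ⊓ S'.1, fun _ f _ _ h => ⟨S.2 f fun i => (h i).1, S'.2 f fun i => (h i).2⟩⟩,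
        fun _ hp => hp.1, fun _ hp => hp.2⟩
  have hdiag : ∀ p ∈ ⋂ S : ι, {p : X × X | S.1.toSetoid p.1 p.2}, p.1 = p.2 := by
    intro p hp
    by_contra hne
    obtain ⟨F, _, _, _, _, ψ, hψ, hψp⟩ := hres _ _ hne
    let Sψ : DiscreteQuotient X :=
      (⟨ψ, (IsLocallyConstant.iff_continuous ψ).2 hψ⟩ : LocallyConstant X F).discreteQuotient
    exact hψp (Set.mem_iInter.1 hp ⟨Sψ, isCompatible_ker ψ⟩)
  obtain ⟨S, hST⟩ := exists_subset_nhds_of_compactSpace hdir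
    (fun S => S.1.isClopen_graph.isClosed) fun p hp => T.isClopen_graph.isOpen.mem_nhds
      (show T.toSetoid p.1 p.2 from hdiag p hp ▸ T.refl p.1)
  exact ⟨S.1, S.2, fun x y hxy => hST (show (x, y) ∈ _ from hxy)⟩

theorem DiscreteQuotient.exists_structure_hom_eq_proj (S : DiscreteQuotient X)
    (hS : IsCompatible L S.toSetoid) :
    ∃ (_ : L.Structure S) (ψ : X →[L] S), ⇑ψ = S.proj := by
  let inst : L.Structure S :=
    { funMap := fun f x => S.proj (funMap f fun i => (x i).out)
      -- relations hold everywhere in the quotient, so that the projection preserves them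
      RelMap := fun _ _ => True }
  refine ⟨inst, ⟨S.proj, fun f x => ?_, fun _ _ _ => trivial⟩, rfl⟩
  exact Quotient.sound (hS f fun i => S.symm _ _ (Quotient.mk_out (x i)))

theorem residuallyFinite_of_forall_exists_isCompatible [CompactSpace X]
    (h : ∀ x y : X, x ≠ y →
      ∃ S : DiscreteQuotient X, IsCompatible L S.toSetoid ∧ ¬ S.toSetoid x y) :
    ResiduallyFinite L X := by
  intro x y hxy
  obtain ⟨S, hS, hSxy⟩ := h x y hxy
  obtain ⟨_, ψ, hψ⟩ := S.exists_structure_hom_eq_proj hS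
  let e := Finite.equivFin S
  let _ := Equiv.inducedStructure (L := L) e
  refine ⟨_, inferInstance, inferInstance, _, inferInstance,
    (Equiv.inducedStructureEquiv (L := L) e).toHom.comp ψ, ?_, fun hψxy => hSxy ?_⟩
  · exact (continuous_of_discreteTopology (f := e)).comp (hψ ▸ S.proj_continuous)
  · have : S.proj x = S.proj y := by simpa [hψ] using e.injective hψxy
    exact Quotient.eq''.1 this

end ResiduallyFinite

theorem exists_isCompatible_not_rel_pushforward {A B : Type*} [TopologicalSpace A]
    [L.Structure A] [CompactSpace A] [TopologicalSpace B] [L.Structure B] [CompactSpace B]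
    [T2Space B] [TotallyDisconnectedSpace B] [Countable B] (hres : ResiduallyFinite L A)
    (φ : A →[L] B) (hq : IsQuotientMap φ) {b b' : B} (hne : b ≠ b') :
    ∃ S : DiscreteQuotient A,
      IsCompatible L S.toSetoid ∧ ¬ (S.pushforward hq).toSetoid b b' := by
  by_contra! h
  let C : Set B := ⋂ (S : DiscreteQuotient A) (_ : IsCompatible L S.toSetoid),
    {y | (S.pushforward hq).toSetoid b y}
  have hC : IsClosed C :=
    isClosed_biInter fun S _ => ((S.pushforward hq).isClopen_setOfPred_rel b).isClosed
  have hbC : b ∈ C := Set.mem_iInter₂.2 fun S _ => (S.pushforward hq).refl b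
  obtain ⟨c, hc, W, hW, hWC⟩ := hC.exists_isClopen_inter_eq_singleton ⟨b, hbC⟩
  obtain ⟨d, hd, hdc⟩ : ∃ d ∈ C, d ≠ c := by
    rcases eq_or_ne b c with rfl | hbc
    · exact ⟨b', Set.mem_iInter₂.2 h, hne.symm⟩
    · exact ⟨b, hbC, hbc⟩
  obtain ⟨S, hS, hSW⟩ := exists_isCompatible_le_of_residuallyFinite hres
    ((DiscreteQuotient.ofIsClopen hW).comap ⟨φ, hq.continuous⟩)
  have hcd : (S.pushforward hq).toSetoid c d :=
    (S.pushforward hq).trans _ _ _ ((S.pushforward hq).symm _ _ (Set.mem_iInter₂.1 hc S hS))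
      (Set.mem_iInter₂.1 hd S hS)
  have hdW : d ∈ W := (DiscreteQuotient.pushforward_le hq hSW hcd).1 (hWC.ge rfl).1
  exact hdc (hWC.le ⟨hdW, hd⟩)

end

theorem countable_quotient_of_profinite_is_profinite_general (L : FirstOrder.Language)
    {A B : Type*}
    [TopologicalSpace A] [L.Structure A]
    [CompactSpace A] [T2Space A]
    [TopologicalSpace B] [L.Structure B]
    (hres : ResiduallyFinite L A)
    (φ : A →[L] B)
    (hq : Topology.IsQuotientMap (φ : A → B))
    (hker : IsClosed {p : A × A | φ p.1 = φ p.2})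
    (hcount : Countable B) :
    CompactSpace B ∧ T2Space B ∧ TotallyDisconnectedSpace B ∧
      ResiduallyFinite L B := by
  have : CompactSpace B := hq.surjective.compactSpace hq.continuous
  have : T2Space B := hq.t2Space_of_isClosed_ker hker
  refine ⟨‹_›, ‹_›, inferInstance,
    residuallyFinite_of_forall_exists_isCompatible fun b b' hne => ?_⟩
  obtain ⟨S, hS, hbb'⟩ := exists_isCompatible_not_rel_pushforward hres φ hq hne
  exact ⟨S.pushforward hq, hS.setoidMap hq.surjective, hbb'⟩

/-- A countable quotient of a profinite algebra by a closed congruence is profinite. -/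
theorem countable_quotient_of_profinite_is_profinite (L : FirstOrder.Language)
    {A B : Type*}
    [TopologicalSpace A] [L.Structure A]
    [CompactSpace A] [T2Space A] [TotallyDisconnectedSpace A]
    [TopologicalSpace B] [L.Structure B]
    (hA : ∀ (n : ℕ) (f : L.Functions n), Continuous fun v : Fin n → A => funMap f v)
    (hB : ∀ (n : ℕ) (f : L.Functions n), Continuous fun v : Fin n → B => funMap f v)
    (hres : ResiduallyFinite L A)
    (φ : A →[L] B) (hc : Continuous (φ : A → B)) (hs : Function.Surjective φ)
    (hq : Topology.IsQuotientMap (φ : A → B))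
    (hker : IsClosed {p : A × A | φ p.1 = φ p.2})
    (hcount : Countable B) :
    CompactSpace B ∧ T2Space B ∧ TotallyDisconnectedSpace B ∧
      ResiduallyFinite L B :=
  countable_quotient_of_profinite_is_profinite_general L hres φ hq hker hcount
end

section
/- Let S be a topological semigroup (a semigroup with a topology making multiplication continuous) whose underlying space is compact, Hausdorff and totally disconnected. Assume S is completely regular, i.e., for every a ∈ S there exists x ∈ S with a * x * a = a, x * a * x = x and a * x = x * a. If S is topologically finitely generated, i.e., there is a finite subset F ⊆ S such that the topological closure of the subsemigroup generated by F is all of S, and S is countable, then S is finite. -/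
/-!
By Baire's theorem a countable compact Hausdorff group is finite: some point is isolated, and
translations move it onto every other point. Complete regularity makes the closure of the
subsemigroup generated by `a` and its inverse such a group, so every element lies in a finite cyclic
group.

Then `⟨F⟩` is finite, by induction on `F`. The elements of `⟨F⟩` lying in the ideal generated by
each generator form an ideal `I` in which any two elements divide each other; every other element
lies in one of the finite `⟨F \ {f}⟩`. Since `⟨F⟩ \ I` is finite, `I` is finitely generated, say by
`X`. The closure `C` of `I` is a compact simple semigroup, and it is covered by the finitely many
`ℋ`-classes `x C ∩ C y` with `x, y ∈ X`, each a countable compact group, hence finite.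
-/

open Set

theorem exists_of_mem_closure_of_isClosed {X Y : Type*} [TopologicalSpace X] [TopologicalSpace Y]
    [CompactSpace Y] {R : Set (X × Y)} (hR : IsClosed R) {A : Set X}
    (hA : ∀ x ∈ A, ∃ y, (x, y) ∈ R) {x : X} (hx : x ∈ closure A) : ∃ y, (x, y) ∈ R := by
  have hAR : A ⊆ Prod.fst '' R := fun x hx ↦ let ⟨y, hy⟩ := hA x hx; ⟨(x, y), hy, rfl⟩
  obtain ⟨⟨x, y⟩, hxy, rfl⟩ := closure_minimal hAR (isClosedMap_fst_of_compactSpace R hR) hx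
  exact ⟨y, hxy⟩

theorem IsCompact.finite_of_countable_of_homogeneous {X : Type*} [TopologicalSpace X] [T2Space X]
    {K : Set X} (hK : IsCompact K) (hKc : K.Countable)
    (hhom : ∀ x ∈ K, ∀ y ∈ K,
      ∃ f : X → X, Continuous f ∧ MapsTo f K K ∧ InjOn f K ∧ f x = y) :
    K.Finite := by
  rcases K.eq_empty_or_nonempty with rfl | hne
  · exact finite_empty
  have : CompactSpace K := isCompact_iff_compactSpace.mp hK
  have : Countable K := hKc.to_subtype
  have : Nonempty K := hne.to_subtype
  obtain ⟨k₀, hk₀⟩ : ∃ k₀ : K, (interior {k₀}).Nonempty :=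
    nonempty_interior_of_iUnion_of_closed (fun _ ↦ isClosed_singleton) (iUnion_of_singleton K)
  have hopen₀ : IsOpen ({k₀} : Set K) := by
    rw [← (hk₀.subset_singleton_iff).mp interior_subset]
    exact isOpen_interior
  have : DiscreteTopology K := by
    refine discreteTopology_iff_isOpen_singleton.mpr fun k ↦ ?_
    obtain ⟨f, hf, hmaps, hinj, hfk⟩ := hhom k k.2 k₀ k₀.2
    have hpre : {k} = hmaps.restrict f K K ⁻¹' {k₀} := by
      ext j
      simp only [mem_singleton_iff, mem_preimage, Subtype.ext_iff, MapsTo.val_restrict_apply]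
      exact ⟨fun h ↦ h ▸ hfk, fun h ↦ hinj j.2 k.2 (h.trans hfk.symm)⟩
    rw [hpre]
    exact hopen₀.preimage (hf.restrict hmaps)
  exact finite_coe_iff.mp finite_of_compact_of_discrete

theorem Subsemigroup.closure_induction_left {M : Type*} [Semigroup M] {s : Set M} {p : M → Prop}
    (mem : ∀ x ∈ s, p x)
    (mul_left : ∀ x ∈ s, ∀ y ∈ Subsemigroup.closure s, p y → p (x * y))
    {x : M} (hx : x ∈ Subsemigroup.closure s) : p x := by
  suffices ∀ x ∈ Subsemigroup.closure s, p x ∧ ∀ y ∈ Subsemigroup.closure s, p y → p (x * y) from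
    (this x hx).1
  intro x hx
  induction hx using Subsemigroup.closure_induction with
  | mem x hx => exact ⟨mem x hx, mul_left x hx⟩
  | mul x y _ hy ihx ihy =>
    refine ⟨ihx.2 y hy ihy.1, fun z hz hpz ↦ ?_⟩
    rw [mul_assoc]
    exact ihx.2 _ (Subsemigroup.mul_mem _ hy hz) (ihy.2 z hz hpz)

section

variable {S : Type*} [Semigroup S]

theorem commute_of_mem_closure_singleton {a h : S} (hh : h ∈ Subsemigroup.closure {a}) :
    Commute a h :=
  have hle : Subsemigroup.closure {a} ≤ Subsemigroup.centralizer {a} :=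
    Subsemigroup.closure_le.mpr <| singleton_subset_iff.mpr <|
      Subsemigroup.mem_centralizer_iff.mpr fun _ hg ↦ (mem_singleton_iff.mp hg) ▸ rfl
  Subsemigroup.mem_centralizer_iff.mp (hle hh) a rfl

open Pointwise in
/-- Scan a word over `F` with value in `I` from the left and cut off a block as soon as its value
lies in `I`: each block is a generator or `p * f` with `p ∈ closure F \ I`, possibly followed by
one more element of `closure F \ I`. -/
theorem Subsemigroup.exists_finite_closure_eq_of_finite_diff {F : Set S} (hF : F.Finite)
    {I : Subsemigroup S} (hI : I ≤ Subsemigroup.closure F)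
    (hdiff : ((Subsemigroup.closure F : Set S) \ I).Finite) :
    ∃ X : Set S, X.Finite ∧ Subsemigroup.closure X = I := by
  set T : Set S := (Subsemigroup.closure F : Set S)
  set Q₀ : Set S := F ∪ (T \ I) * F
  have hQ₀ : Q₀.Finite := hF.union (hdiff.mul hF)
  set X : Set S := I ∩ (Q₀ ∪ Q₀ * (T \ I))
  refine ⟨X, (hQ₀.union (hQ₀.mul hdiff)).inter_of_right _,
    le_antisymm (Subsemigroup.closure_le.mpr inter_subset_left) ?_⟩
  have hFT : F ⊆ T := Subsemigroup.subset_closure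
  have hQ₀T : Q₀ ⊆ T := union_subset hFT <| by
    rintro _ ⟨c, ⟨hc, -⟩, f, hf, rfl⟩
    exact Subsemigroup.mul_mem _ hc (hFT hf)
  have hX {x : S} (hxI : x ∈ I) (hxQ : x ∈ Q₀ ∪ Q₀ * (T \ I)) : x ∈ Subsemigroup.closure X :=
    Subsemigroup.subset_closure ⟨hxI, hxQ⟩
  have key : ∀ r ∈ T, ∀ c ∈ Q₀, c * r ∈ I → c * r ∈ Subsemigroup.closure X := by
    intro r hr
    refine Subsemigroup.closure_induction_left
      (p := fun r ↦ ∀ c ∈ Q₀, c * r ∈ I → c * r ∈ Subsemigroup.closure X)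
      (fun f hf c hc hcf ↦ ?_) (fun f hf r hr ih c hc hcfr ↦ ?_) hr
    · by_cases hcI : c ∈ I
      · by_cases hfI : f ∈ I
        · exact Subsemigroup.mul_mem _ (hX hcI (.inl hc)) (hX hfI (.inl (.inl hf)))
        · exact hX hcf (.inr (mul_mem_mul hc ⟨hFT hf, hfI⟩))
      · exact hX hcf (.inl (.inr (mul_mem_mul ⟨hQ₀T hc, hcI⟩ hf)))
    · by_cases hcI : c ∈ I
      · by_cases hfrI : f * r ∈ I
        · exact Subsemigroup.mul_mem _ (hX hcI (.inl hc)) (ih f (.inl hf) hfrI)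
        · exact hX hcfr (.inr (mul_mem_mul hc ⟨Subsemigroup.mul_mem _ (hFT hf) hr, hfrI⟩))
      · rw [← mul_assoc] at hcfr ⊢
        exact ih _ (.inr (mul_mem_mul ⟨hQ₀T hc, hcI⟩ hf)) hcfr
  intro t ht
  exact Subsemigroup.closure_induction_left (p := fun t ↦ t ∈ I → t ∈ Subsemigroup.closure X)
    (fun f hf hfI ↦ hX hfI (.inl (.inl hf))) (fun f hf r hr _ hfr ↦ key r hr f (.inl hf) hfr)
    (hI ht) ht

structure IsGroupWithIdentity (K : Set S) (e : S) : Prop where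
  mul_mem : ∀ ⦃a b⦄, a ∈ K → b ∈ K → a * b ∈ K
  one_mul : ∀ ⦃a⦄, a ∈ K → e * a = a
  mul_one : ∀ ⦃a⦄, a ∈ K → a * e = a
  exists_inv : ∀ ⦃a⦄, a ∈ K → ∃ b ∈ K, a * b = e ∧ b * a = e

namespace IsGroupWithIdentity

variable {K : Set S} {e : S}

theorem mul_left_cancel (hK : IsGroupWithIdentity K e) {a b c : S} (ha : a ∈ K) (hb : b ∈ K)
    (hc : c ∈ K) (h : a * b = a * c) : b = c := by
  obtain ⟨a', -, -, ha'⟩ := hK.exists_inv ha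
  rw [← hK.one_mul hb, ← hK.one_mul hc, ← ha', mul_assoc, mul_assoc, h]

theorem finite [TopologicalSpace S] [ContinuousMul S] [T2Space S]
    (hK : IsGroupWithIdentity K e) (hKc : IsCompact K) (hcount : K.Countable) : K.Finite := by
  refine hKc.finite_of_countable_of_homogeneous hcount fun x hx y hy ↦ ?_
  obtain ⟨x', hx', -, hx'x⟩ := hK.exists_inv hx
  have hyx' : y * x' ∈ K := hK.mul_mem hy hx'
  refine ⟨(y * x' * ·), continuous_const_mul _, fun z hz ↦ hK.mul_mem hyx' hz,
    fun a ha b hb h ↦ hK.mul_left_cancel hyx' ha hb h, ?_⟩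
  simp only [mul_assoc, hx'x, hK.mul_one hy]

theorem closure [TopologicalSpace S] [ContinuousMul S] [CompactSpace S] [T2Space S]
    (hK : IsGroupWithIdentity K e) : IsGroupWithIdentity (closure K) e where
  mul_mem _ _ ha hb := map_mem_closure₂ continuous_mul ha hb fun _ ha _ hb ↦ hK.mul_mem ha hb
  one_mul _ ha := closure_minimal (t := {a | e * a = a}) (fun _ h ↦ hK.one_mul h)
    (isClosed_eq (continuous_const_mul e) continuous_id) ha
  mul_one _ ha := closure_minimal (t := {a | a * e = a}) (fun _ h ↦ hK.mul_one h)
    (isClosed_eq (continuous_mul_const e) continuous_id) ha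
  exists_inv a ha := by
    have hR : IsClosed {p : S × S | p.2 ∈ _root_.closure K ∧ p.1 * p.2 = e ∧ p.2 * p.1 = e} :=
      (isClosed_closure.preimage continuous_snd).inter
        ((isClosed_eq continuous_mul continuous_const).inter
          (isClosed_eq (continuous_snd.mul continuous_fst) continuous_const))
    refine exists_of_mem_closure_of_isClosed hR (fun b hb ↦ ?_) ha
    obtain ⟨b', hb', h⟩ := hK.exists_inv hb
    exact ⟨b', subset_closure hb', h⟩

end IsGroupWithIdentity

theorem isGroupWithIdentity_closure_pair {a x : S} (hax : a * x * a = a) (hxa : x * a * x = x)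
    (hcomm : a * x = x * a) : IsGroupWithIdentity (Subsemigroup.closure {a, x}) (a * x) := by
  have hid : ∀ s ∈ Subsemigroup.closure {a, x}, a * x * s = s ∧ s * (a * x) = s := by
    intro s hs
    induction hs using Subsemigroup.closure_induction with
    | mem s hs =>
      rcases hs with rfl | rfl
      · exact ⟨hax, by rw [hcomm, ← mul_assoc, hax]⟩
      · exact ⟨by rw [hcomm, hxa], by rw [← mul_assoc, hxa]⟩
    | mul p q _ _ hp hq => exact ⟨by rw [← mul_assoc, hp.1], by rw [mul_assoc, hq.2]⟩
  refine ⟨fun _ _ ↦ Subsemigroup.mul_mem _, fun s hs ↦ (hid s hs).1, fun s hs ↦ (hid s hs).2, ?_⟩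
  intro s hs
  induction hs using Subsemigroup.closure_induction with
  | mem s hs =>
    rcases hs with rfl | rfl
    · exact ⟨x, Subsemigroup.subset_closure (by simp), rfl, hcomm.symm⟩
    · exact ⟨a, Subsemigroup.subset_closure (by simp), hcomm.symm, rfl⟩
  | mul p q hp hq ihp ihq =>
    obtain ⟨p', hp', hpp', hp'p⟩ := ihp
    obtain ⟨q', hq', hqq', hq'q⟩ := ihq
    refine ⟨q' * p', Subsemigroup.mul_mem _ hq' hp', ?_, ?_⟩
    · rw [mul_assoc, ← mul_assoc q, hqq', (hid p' hp').1, hpp']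
    · rw [mul_assoc, ← mul_assoc p', hp'p, (hid q hq).1, hq'q]

/-- As `h ∈ closure {a}` means `h = a ^ n` with `n ≥ 1`, this says `a = a ^ (n + 2)`: `a` lies in
a finite cyclic subgroup of `S`. -/
def IsTorsionGroupElem (a : S) : Prop :=
  ∃ h ∈ Subsemigroup.closure {a}, a * a * h = a

namespace IsTorsionGroupElem

variable {a : S}

theorem isIdempotentElem_mul {h : S} (hh : h ∈ Subsemigroup.closure {a}) (hah : a * a * h = a) :
    IsIdempotentElem (a * h) := by
  calc a * h * (a * h) = a * (h * a) * h := by simp only [mul_assoc]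
    _ = a * h := by rw [← (commute_of_mem_closure_singleton hh).eq, ← mul_assoc, hah]

theorem exists_idempotent (ha : IsTorsionGroupElem a) :
    ∃ e ∈ Subsemigroup.closure {a}, IsIdempotentElem e ∧ e * a = a ∧ a * e = a := by
  obtain ⟨h, hh, hah⟩ := ha
  refine ⟨a * h, Subsemigroup.mul_mem _ (Subsemigroup.subset_closure rfl) hh,
    isIdempotentElem_mul hh hah, ?_, by rw [← mul_assoc, hah]⟩
  rw [mul_assoc, ← (commute_of_mem_closure_singleton hh).eq, ← mul_assoc, hah]

theorem of_isGroupWithIdentity {K : Set S} {e : S} (hK : IsGroupWithIdentity K e)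
    (hfin : K.Finite) (ha : a ∈ K) : IsTorsionGroupElem a := by
  set A : Set S := (Subsemigroup.closure {a} : Set S)
  have haA : a ∈ A := Subsemigroup.subset_closure rfl
  have hAK : A ⊆ K := Subsemigroup.closure_le (S := ⟨K, fun hx hy ↦ hK.mul_mem hx hy⟩).mpr
    (singleton_subset_iff.mpr ha)
  have hmaps : MapsTo (a * ·) A A := fun _ hx ↦ Subsemigroup.mul_mem _ haA hx
  have hsurj : SurjOn (a * ·) A A := ((hfin.subset hAK).injOn_iff_bijOn_of_mapsTo hmaps).mp
    (fun _ hx _ hy h ↦ hK.mul_left_cancel ha (hAK hx) (hAK hy) h) |>.surjOn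
  obtain ⟨h₁, hh₁, hah₁⟩ := hsurj haA
  obtain ⟨h₂, hh₂, hah₂⟩ := hsurj hh₁
  refine ⟨h₂, hh₂, ?_⟩
  simp only at hah₁ hah₂
  rw [mul_assoc, hah₂, hah₁]

theorem exists_mul_mul_eq_of_mul_mul_eq_right {g z : S} (hg : IsTorsionGroupElem g) {p : S}
    (hpz : p * z * g = z) : ∃ h ∈ Subsemigroup.closure {g}, z * g * h = z := by
  obtain ⟨h, hh, hgh⟩ := hg
  have hM : ∀ t ∈ Subsemigroup.closure {g}, ∃ p', p' * z * t = z := fun t ht ↦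
    Subsemigroup.closure_induction_left (p := fun t ↦ ∃ p', p' * z * t = z)
      (fun _ hg' ↦ ⟨p, (mem_singleton_iff.mp hg') ▸ hpz⟩)
      (fun _ hg' t _ ⟨p', hp'⟩ ↦ ⟨p' * p, by
        rw [mem_singleton_iff.mp hg', show p' * p * z * (g * t) = p' * (p * z * g) * t by
          simp only [mul_assoc], hpz, hp']⟩) ht
  obtain ⟨p', hp'⟩ := hM (g * h) (Subsemigroup.mul_mem _ (Subsemigroup.subset_closure rfl) hh)
  refine ⟨h, hh, ?_⟩
  calc z * g * h = p' * z * (g * h) * (g * h) := by rw [hp', mul_assoc]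
    _ = z := by rw [mul_assoc _ (g * h), (isIdempotentElem_mul hh hgh).eq, hp']

theorem exists_mul_mul_eq_of_mul_mul_eq_left {g z : S} (hg : IsTorsionGroupElem g) {q : S}
    (hzq : g * z * q = z) : ∃ h ∈ Subsemigroup.closure {g}, h * g * z = z := by
  obtain ⟨h, hh, hgh⟩ := hg
  have hM : ∀ t ∈ Subsemigroup.closure {g}, ∃ q', t * z * q' = z := fun t ht ↦
    Subsemigroup.closure_induction_left (p := fun t ↦ ∃ q', t * z * q' = z)
      (fun _ hg' ↦ ⟨q, (mem_singleton_iff.mp hg') ▸ hzq⟩)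
      (fun _ hg' t _ ⟨q', hq'⟩ ↦ ⟨q' * q, by
        rw [mem_singleton_iff.mp hg', show g * t * z * (q' * q) = g * (t * z * q') * q by
          simp only [mul_assoc], hq', hzq]⟩) ht
  obtain ⟨q', hq'⟩ := hM (g * h) (Subsemigroup.mul_mem _ (Subsemigroup.subset_closure rfl) hh)
  refine ⟨h, hh, ?_⟩
  calc h * g * z = g * h * (g * h * z * q') := by
        rw [hq', ← (commute_of_mem_closure_singleton hh).eq]
    _ = z := by
      rw [show g * h * (g * h * z * q') = g * h * (g * h) * z * q' by simp only [mul_assoc],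
        (isIdempotentElem_mul hh hgh).eq, hq']

end IsTorsionGroupElem

theorem isTorsionGroupElem_of_commute_inverse [TopologicalSpace S] [ContinuousMul S]
    [CompactSpace S] [T2Space S] [Countable S] {a x : S} (hax : a * x * a = a)
    (hxa : x * a * x = x) (hcomm : a * x = x * a) : IsTorsionGroupElem a := by
  have hK := (isGroupWithIdentity_closure_pair hax hxa hcomm).closure
  exact .of_isGroupWithIdentity hK (hK.finite isClosed_closure.isCompact (to_countable _))
    (subset_closure (Subsemigroup.subset_closure (by simp)))

/-- Green's `𝒥`-preorder relative to `T`, with no identity adjoined: `u ∈ T v T`. -/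
def JBelow (T : Subsemigroup S) (u v : S) : Prop :=
  ∃ p ∈ T, ∃ q ∈ T, p * v * q = u

namespace JBelow

variable {T : Subsemigroup S} {u v w : S}

theorem trans (huv : JBelow T u v) (hvw : JBelow T v w) : JBelow T u w := by
  obtain ⟨p, hp, q, hq, rfl⟩ := huv
  obtain ⟨r, hr, s, hs, rfl⟩ := hvw
  exact ⟨p * r, T.mul_mem hp hr, s * q, T.mul_mem hs hq, by simp only [mul_assoc]⟩

theorem mul_right (huv : JBelow T u v) {r : S} (hr : r ∈ T) : JBelow T (u * r) v := by
  obtain ⟨p, hp, q, hq, rfl⟩ := huv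
  exact ⟨p, hp, q * r, T.mul_mem hq hr, by simp only [mul_assoc]⟩

theorem mul_left (huv : JBelow T u v) {r : S} (hr : r ∈ T) : JBelow T (r * u) v := by
  obtain ⟨p, hp, q, hq, rfl⟩ := huv
  exact ⟨r * p, T.mul_mem hr hp, q, hq, by simp only [mul_assoc]⟩

end JBelow

section Torsion

variable (hS : ∀ a : S, IsTorsionGroupElem a) {T : Subsemigroup S}
include hS

theorem jBelow_refl {a : S} (ha : a ∈ T) : JBelow T a a := by
  obtain ⟨e, he, -, hea, hae⟩ := (hS a).exists_idempotent
  have heT := (Subsemigroup.closure_singleton_le_iff_mem a T).mpr ha he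
  exact ⟨e, heT, e, heT, by rw [hea, hae]⟩

theorem jBelow_mul_left_of_mem {a b : S} (ha : a ∈ T) (hb : b ∈ T) : JBelow T (a * b) b := by
  obtain ⟨e, he, -, hea, hae⟩ := (hS (a * b)).exists_idempotent
  have heT := (Subsemigroup.closure_singleton_le_iff_mem _ T).mpr (T.mul_mem ha hb) he
  exact ⟨e * a, T.mul_mem heT ha, e, heT, by rw [mul_assoc e a b, hea, hae]⟩

theorem jBelow_mul_comm {a b : S} (ha : a ∈ T) (hb : b ∈ T) : JBelow T (a * b) (b * a) := by
  obtain ⟨h, hh, habh⟩ := hS (a * b)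
  have hhT := (Subsemigroup.closure_singleton_le_iff_mem _ T).mpr (T.mul_mem ha hb) hh
  exact ⟨a, ha, b * h, T.mul_mem hb hhT, by rw [← habh]; simp only [mul_assoc]⟩

theorem jBelow_mul_self {a : S} (ha : a ∈ T) : JBelow T a (a * a) := by
  obtain ⟨h, hh, hah⟩ := hS a
  obtain ⟨e, he, -, hea, -⟩ := (hS a).exists_idempotent
  have hle := (Subsemigroup.closure_singleton_le_iff_mem a T).mpr ha
  exact ⟨e, hle he, h, hle hh, by rw [mul_assoc e, hah, hea]⟩

theorem jBelow_mul_mul_mul {a s b : S} (ha : a ∈ T) (hs : s ∈ T) (hb : b ∈ T) :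
    JBelow T (a * s * b) (a * b) := by
  have h₁ : JBelow T (a * (s * b)) (s * (b * a)) := by
    rw [← mul_assoc s]
    exact jBelow_mul_comm hS ha (T.mul_mem hs hb)
  rw [mul_assoc]
  exact h₁.trans <| (jBelow_mul_left_of_mem hS hs (T.mul_mem hb ha)).trans
    (jBelow_mul_comm hS hb ha)

/-- Via `u ≤ u * u = (p v q) (r w s) ≤ v (q r) w ≤ v w`. -/
theorem JBelow.mul_of_jBelow {u v w : S} (hu : u ∈ T) (hv : v ∈ T) (hw : w ∈ T)
    (huv : JBelow T u v) (huw : JBelow T u w) : JBelow T u (v * w) := by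
  obtain ⟨p, hp, q, hq, hpq⟩ := huv
  obtain ⟨r, hr, s, hs, hrs⟩ := huw
  have hmid : JBelow T (u * u) (v * (q * r) * w) :=
    ⟨p, hp, s, hs, by
      rw [show u * u = p * v * q * (r * w * s) by rw [hpq, hrs]]
      simp only [mul_assoc]⟩
  exact (jBelow_mul_self hS hu).trans <| hmid.trans <| jBelow_mul_mul_mul hS hv (T.mul_mem hq hr) hw

theorem JBelow.of_mem_closure {G : Set S} (hGT : G ⊆ T) {u v : S} (hu : u ∈ T)
    (hG : ∀ g ∈ G, JBelow T u g) (hv : v ∈ Subsemigroup.closure G) : JBelow T u v := by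
  have hle : Subsemigroup.closure G ≤ T := Subsemigroup.closure_le.mpr hGT
  induction hv using Subsemigroup.closure_induction with
  | mem g hg => exact hG g hg
  | mul v w hv hw huv huw => exact huv.mul_of_jBelow hS hu (hle hv) (hle hw) huw

end Torsion

def IsSimpleSubsemigroup (C : Subsemigroup S) : Prop :=
  ∀ u ∈ C, ∀ v ∈ C, JBelow C u v

theorem IsSimpleSubsemigroup.topologicalClosure [TopologicalSpace S] [ContinuousMul S]
    [CompactSpace S] [T2Space S] {I : Subsemigroup S} (hI : IsSimpleSubsemigroup I) :
    IsSimpleSubsemigroup I.topologicalClosure := by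
  set K := I.topologicalClosure
  have hK : IsClosed (K : Set S) := I.isClosed_topologicalClosure
  have hR : IsClosed
      {r : (S × S) × (S × S) | r.2.1 ∈ K ∧ r.2.2 ∈ K ∧ r.2.1 * r.1.2 * r.2.2 = r.1.1} :=
    (hK.preimage (by fun_prop)).inter <| (hK.preimage (by fun_prop)).inter <|
      isClosed_eq (by fun_prop) (by fun_prop)
  intro u hu v hv
  have huv : (u, v) ∈ closure ((I : Set S) ×ˢ I) := by
    rw [closure_prod_eq]
    exact ⟨hu, hv⟩
  obtain ⟨⟨p, q⟩, hp, hq, hpq⟩ := exists_of_mem_closure_of_isClosed hR (fun ⟨u', v'⟩ ⟨hu', hv'⟩ ↦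
    let ⟨p, hp, q, hq, h⟩ := hI u' hu' v' hv'
    ⟨(p, q), I.le_topologicalClosure hp, I.le_topologicalClosure hq, h⟩) huv
  exact ⟨p, hp, q, hq, hpq⟩

namespace IsSimpleSubsemigroup

variable (hS : ∀ a : S, IsTorsionGroupElem a) {C : Subsemigroup S} (hC : IsSimpleSubsemigroup C)
include hS hC

theorem exists_mul_mul_eq_right {z c : S} (hz : z ∈ C) (hc : c ∈ C) :
    ∃ d ∈ C, z * c * d = z := by
  obtain ⟨p, -, q, hq, hpq⟩ := hC z hz (z * c) (C.mul_mem hz hc)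
  obtain ⟨h, hh, hzh⟩ := (hS (c * q)).exists_mul_mul_eq_of_mul_mul_eq_right (p := p) (z := z)
    (by simpa only [mul_assoc] using hpq)
  refine ⟨q * h, C.mul_mem hq ((Subsemigroup.closure_singleton_le_iff_mem _ _).mpr
    (C.mul_mem hc hq) hh), ?_⟩
  simpa only [mul_assoc] using hzh

theorem exists_mul_mul_eq_left {z c : S} (hz : z ∈ C) (hc : c ∈ C) :
    ∃ d ∈ C, d * c * z = z := by
  obtain ⟨p, hp, q, -, hpq⟩ := hC z hz (c * z) (C.mul_mem hc hz)
  obtain ⟨h, hh, hzh⟩ := (hS (p * c)).exists_mul_mul_eq_of_mul_mul_eq_left (q := q) (z := z)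
    (by simpa only [mul_assoc] using hpq)
  refine ⟨h * p, C.mul_mem ((Subsemigroup.closure_singleton_le_iff_mem _ _).mpr
    (C.mul_mem hp hc) hh) hp, ?_⟩
  simpa only [mul_assoc] using hzh

theorem image_mul_left_eq {x u : S} (hx : x ∈ C) (hu : u ∈ (x * ·) '' C) :
    (u * ·) '' C = (x * ·) '' C := by
  obtain ⟨c, hc, rfl⟩ := hu
  obtain ⟨d, hd, hxcd⟩ := exists_mul_mul_eq_right hS hC hx hc
  refine Subset.antisymm ?_ ?_
  · rintro _ ⟨c', hc', rfl⟩
    exact ⟨c * c', C.mul_mem hc hc', by simp only [mul_assoc]⟩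
  · rintro _ ⟨c', hc', rfl⟩
    exact ⟨d * c', C.mul_mem hd hc', by simp only [← mul_assoc, hxcd]⟩

theorem image_mul_right_eq {y u : S} (hy : y ∈ C) (hu : u ∈ (· * y) '' C) :
    (· * u) '' C = (· * y) '' C := by
  obtain ⟨c, hc, rfl⟩ := hu
  obtain ⟨d, hd, hdcy⟩ := exists_mul_mul_eq_left hS hC hy hc
  refine Subset.antisymm ?_ ?_
  · rintro _ ⟨c', hc', rfl⟩
    exact ⟨c' * c, C.mul_mem hc' hc, by simp only [mul_assoc]⟩
  · rintro _ ⟨c', hc', rfl⟩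
    exact ⟨c' * d, C.mul_mem hc' hd, by simp only [mul_assoc]; rw [← mul_assoc d, hdcy]⟩

theorem image_inter_image_eq {x y v : S} (hx : x ∈ C) (hy : y ∈ C)
    (hv : v ∈ (x * ·) '' C ∩ (· * y) '' C) :
    (v * ·) '' C ∩ (· * v) '' C = (x * ·) '' C ∩ (· * y) '' C := by
  rw [image_mul_left_eq hS hC hx hv.1, image_mul_right_eq hS hC hy hv.2]

/-- In a simple semigroup, `x C ∩ C y` is an `ℋ`-class, hence a group once it contains an
idempotent. -/
theorem isGroupWithIdentity_inter {x y u : S} (hx : x ∈ C) (hy : y ∈ C)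
    (hu : u ∈ (x * ·) '' C ∩ (· * y) '' C) :
    ∃ e, IsGroupWithIdentity ((x * ·) '' C ∩ (· * y) '' C) e := by
  set D := (x * ·) '' C ∩ (· * y) '' C
  have hDmul : ∀ ⦃a b⦄, a ∈ D → b ∈ D → a * b ∈ D := by
    rintro _ _ ⟨⟨a, ha, rfl⟩, -⟩ ⟨-, ⟨b, hb, rfl⟩⟩
    exact ⟨⟨a * (b * y), C.mul_mem ha (C.mul_mem hb hy), by simp only [mul_assoc]⟩,
      ⟨x * a * b, C.mul_mem (C.mul_mem hx ha) hb, by simp only [mul_assoc]⟩⟩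
  have hD : ∀ v ∈ D, D = (v * ·) '' C ∩ (· * v) '' C := fun v hv ↦
    (image_inter_image_eq hS hC hx hy hv).symm
  obtain ⟨e, he, hee, -, -⟩ := (hS u).exists_idempotent
  have heD : e ∈ D := Subsemigroup.closure_le (S := ⟨D, fun ha hb ↦ hDmul ha hb⟩).mpr
    (singleton_subset_iff.mpr hu) he
  have heC : e ∈ C := by
    obtain ⟨⟨a, ha, rfl⟩, -⟩ := heD
    exact C.mul_mem hx ha
  have hone_mul : ∀ ⦃v⦄, v ∈ D → e * v = v := by
    intro v hv
    rw [hD e heD] at hv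
    obtain ⟨⟨c, -, rfl⟩, -⟩ := hv
    rw [← mul_assoc, hee.eq]
  have hmul_one : ∀ ⦃v⦄, v ∈ D → v * e = v := by
    intro v hv
    rw [hD e heD] at hv
    obtain ⟨-, ⟨c, -, rfl⟩⟩ := hv
    rw [mul_assoc, hee.eq]
  refine ⟨e, hDmul, hone_mul, hmul_one, fun v hv ↦ ?_⟩
  obtain ⟨⟨c, hc, hvc⟩, ⟨c', hc', hc'v⟩⟩ : e ∈ (v * ·) '' C ∩ (· * v) '' C := hD v hv ▸ heD
  have hright : v * (e * c * e) = e := by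
    simp only at hvc
    rw [← mul_assoc, ← mul_assoc, hmul_one hv, hvc, hee.eq]
  have hleft : e * c' * e * v = e := by
    simp only at hc'v
    rw [mul_assoc _ e, hone_mul hv, mul_assoc, hc'v, hee.eq]
  have heq : e * c * e = e * c' * e := by
    calc e * c * e = e * c' * e * v * (e * c * e) := by
          rw [hleft, ← mul_assoc, ← mul_assoc, hee.eq]
      _ = e * c' * e := by rw [mul_assoc _ v, hright, mul_assoc _ e e, hee.eq]
  refine ⟨e * c * e, ?_, hright, heq ▸ hleft⟩
  rw [hD e heD]
  exact ⟨⟨c * e, C.mul_mem hc heC, by simp only [mul_assoc]⟩, ⟨e * c, C.mul_mem heC hc, rfl⟩⟩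

end IsSimpleSubsemigroup

def jBelowGenerators (F : Set S) : Subsemigroup S where
  carrier := {t | t ∈ Subsemigroup.closure F ∧ ∀ f ∈ F, JBelow (Subsemigroup.closure F) t f}
  mul_mem' ha hb := ⟨Subsemigroup.mul_mem _ ha.1 hb.1, fun f hf ↦ (ha.2 f hf).mul_right hb.1⟩

section JBelowGenerators

variable {F : Set S} {t r : S}

theorem jBelowGenerators_le : jBelowGenerators F ≤ Subsemigroup.closure F := fun _ ht ↦ ht.1

theorem mul_mem_jBelowGenerators_left (ht : t ∈ jBelowGenerators F)
    (hr : r ∈ Subsemigroup.closure F) : r * t ∈ jBelowGenerators F :=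
  ⟨Subsemigroup.mul_mem _ hr ht.1, fun f hf ↦ (ht.2 f hf).mul_left hr⟩

theorem mul_mem_jBelowGenerators_right (ht : t ∈ jBelowGenerators F)
    (hr : r ∈ Subsemigroup.closure F) : t * r ∈ jBelowGenerators F :=
  ⟨Subsemigroup.mul_mem _ ht.1 hr, fun f hf ↦ (ht.2 f hf).mul_right hr⟩

variable (hS : ∀ a : S, IsTorsionGroupElem a)
include hS

theorem mem_closure_diff_singleton_or_jBelow (ht : t ∈ Subsemigroup.closure F) (f : S) :
    t ∈ Subsemigroup.closure (F \ {f}) ∨ JBelow (Subsemigroup.closure F) t f := by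
  induction ht using Subsemigroup.closure_induction with
  | mem g hg =>
    by_cases hgf : g = f
    · exact .inr (hgf ▸ jBelow_refl hS (Subsemigroup.subset_closure hg))
    · exact .inl (Subsemigroup.subset_closure ⟨hg, hgf⟩)
  | mul a b ha hb iha ihb =>
    rcases iha with iha | iha
    · rcases ihb with ihb | ihb
      · exact .inl (Subsemigroup.mul_mem _ iha ihb)
      · exact .inr (ihb.mul_left ha)
    · exact .inr (iha.mul_right hb)

theorem closure_diff_jBelowGenerators_subset :
    (Subsemigroup.closure F : Set S) \ jBelowGenerators F ⊆
      ⋃ f ∈ F, (Subsemigroup.closure (F \ {f}) : Set S) := by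
  intro t ⟨ht, htI⟩
  obtain ⟨f, hf, hft⟩ : ∃ f ∈ F, ¬ JBelow (Subsemigroup.closure F) t f := by
    by_contra! h
    exact htI ⟨ht, h⟩
  exact mem_biUnion hf ((mem_closure_diff_singleton_or_jBelow hS ht f).resolve_right hft)

theorem isSimpleSubsemigroup_jBelowGenerators : IsSimpleSubsemigroup (jBelowGenerators F) := by
  intro u hu v hv
  obtain ⟨p, hp, q, hq, hpq⟩ :=
    JBelow.of_mem_closure hS Subsemigroup.subset_closure hu.1 hu.2 hv.1
  obtain ⟨e, he, -, hea, hae⟩ := (hS u).exists_idempotent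
  have heI := (Subsemigroup.closure_singleton_le_iff_mem _ _).mpr hu he
  refine ⟨e * p, mul_mem_jBelowGenerators_right heI hp, q * e,
    mul_mem_jBelowGenerators_left heI hq, ?_⟩
  calc e * p * v * (q * e) = e * (p * v * q) * e := by simp only [mul_assoc]
    _ = u := by rw [hpq, hea, hae]

end JBelowGenerators

section Finiteness

variable (hS : ∀ a : S, IsTorsionGroupElem a)
include hS

theorem exists_mem_image_mul_of_mem_closure {X : Set S} {C : Subsemigroup S}
    (hXC : Subsemigroup.closure X ≤ C) {t : S} (ht : t ∈ Subsemigroup.closure X) :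
    (∃ x ∈ X, t ∈ (x * ·) '' C) ∧ ∃ y ∈ X, t ∈ (· * y) '' C := by
  induction ht using Subsemigroup.closure_induction with
  | mem x hx =>
    obtain ⟨e, he, -, hex, hxe⟩ := (hS x).exists_idempotent
    have heC := (Subsemigroup.closure_singleton_le_iff_mem _ _).mpr
      (hXC (Subsemigroup.subset_closure hx)) he
    exact ⟨⟨x, hx, e, heC, hxe⟩, ⟨x, hx, e, heC, hex⟩⟩
  | mul a b ha hb iha ihb =>
    obtain ⟨x, hx, c, hc, hca⟩ := iha.1
    obtain ⟨y, hy, c', hc', hc'b⟩ := ihb.2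
    refine ⟨⟨x, hx, c * b, C.mul_mem hc (hXC hb), ?_⟩, ⟨y, hy, a * c', C.mul_mem (hXC ha) hc', ?_⟩⟩
    · simp only at hca ⊢
      rw [← mul_assoc, hca]
    · simp only at hc'b ⊢
      rw [mul_assoc, hc'b]

variable [TopologicalSpace S] [ContinuousMul S] [CompactSpace S] [T2Space S] [Countable S]

theorem finite_topologicalClosure_of_isSimpleSubsemigroup {X : Set S} (hX : X.Finite)
    (hsimple : IsSimpleSubsemigroup (Subsemigroup.closure X)) :
    ((Subsemigroup.closure X).topologicalClosure : Set S).Finite := by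
  set C := (Subsemigroup.closure X).topologicalClosure
  have hCs : IsSimpleSubsemigroup C := hsimple.topologicalClosure
  have hCc : IsCompact (C : Set S) := (Subsemigroup.isClosed_topologicalClosure _).isCompact
  have hXC : Subsemigroup.closure X ≤ C := Subsemigroup.le_topologicalClosure _
  set D : S → S → Set S := fun x y ↦ (x * ·) '' C ∩ (· * y) '' C
  have hDclosed (x y : S) : IsClosed (D x y) :=
    (hCc.image (continuous_const_mul x)).isClosed.inter
      (hCc.image (continuous_mul_const y)).isClosed
  have hDfin : ∀ x ∈ C, ∀ y ∈ C, (D x y).Finite := by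
    intro x hx y hy
    rcases (D x y).eq_empty_or_nonempty with h | ⟨u, hu⟩
    · exact h ▸ finite_empty
    obtain ⟨e, he⟩ := hCs.isGroupWithIdentity_inter hS hx hy hu
    exact he.finite (hDclosed x y).isCompact (to_countable _)
  have hcover : (C : Set S) ⊆ ⋃ x ∈ X, ⋃ y ∈ X, D x y := by
    refine closure_minimal (fun t ht ↦ ?_)
      (hX.isClosed_biUnion fun x _ ↦ hX.isClosed_biUnion fun y _ ↦ hDclosed x y)
    obtain ⟨⟨x, hx, htx⟩, ⟨y, hy, hty⟩⟩ := exists_mem_image_mul_of_mem_closure hS hXC ht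
    exact mem_biUnion hx (mem_biUnion hy ⟨htx, hty⟩)
  have hXC' : X ⊆ C := fun x hx ↦ hXC (Subsemigroup.subset_closure hx)
  exact (hX.biUnion fun x hx ↦ hX.biUnion fun y hy ↦ hDfin x (hXC' hx) y (hXC' hy)).subset hcover

theorem finite_closure_of_forall_diff_singleton {F : Set S} (hF : F.Finite)
    (hdiff : ∀ f ∈ F, (Subsemigroup.closure (F \ {f}) : Set S).Finite) :
    (Subsemigroup.closure F : Set S).Finite := by
  have hcompl : ((Subsemigroup.closure F : Set S) \ jBelowGenerators F).Finite :=
    (hF.biUnion hdiff).subset (closure_diff_jBelowGenerators_subset hS)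
  obtain ⟨X, hX, hXI⟩ :=
    Subsemigroup.exists_finite_closure_eq_of_finite_diff hF jBelowGenerators_le hcompl
  have hI : (jBelowGenerators F : Set S).Finite := by
    rw [← hXI]
    exact (finite_topologicalClosure_of_isSimpleSubsemigroup hS hX
      (hXI ▸ isSimpleSubsemigroup_jBelowGenerators hS)).subset
      (Subsemigroup.le_topologicalClosure _)
  exact (hcompl.union hI).subset (by rw [sdiff_union_self]; exact subset_union_left)

theorem finite_closure_finset (F : Finset S) :
    (Subsemigroup.closure (F : Set S) : Set S).Finite := by
  classical
  induction F using Finset.strongInduction with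
  | H F ih =>
    refine finite_closure_of_forall_diff_singleton hS F.finite_toSet fun f hf ↦ ?_
    rw [← Finset.coe_erase]
    exact ih _ (Finset.erase_ssubset hf)

end Finiteness

end

theorem countable_fg_profinite_completely_regular_semigroup_finite_general {S : Type*}
    [Semigroup S] [TopologicalSpace S] [ContinuousMul S]
    [CompactSpace S] [T2Space S]
    (hreg : ∀ a : S, ∃ x : S, a * x * a = a ∧ x * a * x = x ∧ a * x = x * a)
    (hfg : ∃ F : Finset S,
      closure ((Subsemigroup.closure (F : Set S) : Subsemigroup S) : Set S) = Set.univ)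
    (hcount : Countable S) : Finite S := by
  have hS (a : S) : IsTorsionGroupElem a :=
    let ⟨_, hax, hxa, hcomm⟩ := hreg a
    isTorsionGroupElem_of_commute_inverse hax hxa hcomm
  obtain ⟨F, hF⟩ := hfg
  have hfin := finite_closure_finset hS F
  rw [hfin.isClosed.closure_eq] at hF
  rw [hF] at hfin
  exact finite_univ_iff.mp hfin

/-- A finitely generated countable profinite completely regular semigroup is finite. -/
theorem countable_fg_profinite_completely_regular_semigroup_finite {S : Type*}
    [Semigroup S] [TopologicalSpace S] [ContinuousMul S]
    [CompactSpace S] [T2Space S] [TotallyDisconnectedSpace S]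
    (hreg : ∀ a : S, ∃ x : S, a * x * a = a ∧ x * a * x = x ∧ a * x = x * a)
    (hfg : ∃ F : Finset S,
      closure ((Subsemigroup.closure (F : Set S) : Subsemigroup S) : Set S) = Set.univ)
    (hcount : Countable S) : Finite S :=
  countable_fg_profinite_completely_regular_semigroup_finite_general hreg hfg hcount
end

section
/- The term algebra is residually finite: let L be a first-order language and X any type. For any two distinct terms s, t : L.Term X there exist a finite type F, an L.Structure on F, and a valuation v : X → F such that the realizations of s and t in F under v are distinct, i.e., Term.realize v s ≠ Term.realize v t. -/
open FirstOrder Language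

namespace TermRF

open FirstOrder.Language

variable {L : FirstOrder.Language} {X : Type*}

/-- The list of subterms of a term. -/
def subterms : L.Term X → List (L.Term X)
  | Term.var x => [Term.var x]
  | Term.func f ts => Term.func f ts :: (List.ofFn fun i => subterms (ts i)).flatten

theorem self_mem_subterms (u : L.Term X) : u ∈ subterms u := by
  cases u with
  | var x => simp [subterms]
  | func f ts => simp [subterms]

theorem arg_mem_subterms {n : ℕ} {f : L.Functions n} {ts : Fin n → L.Term X} {i : Fin n}
    (w : L.Term X) (hw : Term.func f ts ∈ subterms w) : ts i ∈ subterms w := by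
  induction w with
  | var x => simp [subterms] at hw
  | func g us ih =>
    rw [subterms, List.mem_cons] at hw
    rcases hw with hw | hw
    · injection hw with h1 h2 h3
      subst h1
      have h3' := eq_of_heq h3
      subst h3'
      rw [subterms, List.mem_cons]
      right
      simp only [List.mem_flatten, List.mem_ofFn]
      exact ⟨_, ⟨i, rfl⟩, self_mem_subterms _⟩
    · simp only [List.mem_flatten, List.mem_ofFn] at hw
      obtain ⟨_, ⟨j, rfl⟩, hj⟩ := hw
      rw [subterms, List.mem_cons]
      right
      simp only [List.mem_flatten, List.mem_ofFn]
      exact ⟨subterms (us j), ⟨j, rfl⟩, ih j hj⟩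

end TermRF

/-- The term algebra is residually finite: distinct terms can be separated in a
finite `L`-structure. -/
theorem term_algebra_residually_finite (L : FirstOrder.Language) {X : Type*}
    (s t : L.Term X) (h : s ≠ t) :
    ∃ (F : Type) (_ : Finite F) (iS : L.Structure F) (v : X → F),
      letI := iS;
      Term.realize v s ≠ Term.realize v t := by
  classical
  set l : List (L.Term X) := TermRF.subterms s ++ TermRF.subterms t with hl
  have hs : s ∈ l := List.mem_append_left _ (TermRF.self_mem_subterms s)
  have ht : t ∈ l := List.mem_append_right _ (TermRF.self_mem_subterms t)
  -- closure of `l` under subterms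
  have hclosed : ∀ {n : ℕ} (f : L.Functions n) (ts : Fin n → L.Term X) (i : Fin n),
      Term.func f ts ∈ l → ts i ∈ l := by
    intro n f ts i hmem
    rcases List.mem_append.1 hmem with h' | h'
    · exact List.mem_append_left _ (TermRF.arg_mem_subterms _ h')
    · exact List.mem_append_right _ (TermRF.arg_mem_subterms _ h')
  let F' := {u : L.Term X // u ∈ l}
  have hF' : Finite F' := List.Subtype.fintype l |>.finite
  letI iS' : L.Structure F' :=
    { funMap := fun {n} f a =>
        if hmem : Term.func f (fun i => (a i).1) ∈ l then ⟨_, hmem⟩ else ⟨s, hs⟩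
      RelMap := fun {n} _ _ => False }
  let v' : X → F' := fun x => if hx : Term.var x ∈ l then ⟨_, hx⟩ else ⟨s, hs⟩
  have key : ∀ (u : L.Term X) (hu : u ∈ l), Term.realize v' u = ⟨u, hu⟩ := by
    intro u
    induction u with
    | var x => intro hu; simp only [Term.realize, v']; rw [dif_pos hu]
    | func f ts ih =>
      intro hu
      have hts : ∀ i, ts i ∈ l := fun i => hclosed f ts i hu
      have : (fun i => Term.realize v' (ts i)) = fun i => (⟨ts i, hts i⟩ : F') := by
        funext i; exact ih i (hts i)
      show Structure.funMap f (fun i => Term.realize v' (ts i)) = _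
      rw [this]
      show dite _ _ _ = _
      have heq : (fun i => ((⟨ts i, hts i⟩ : F') : L.Term X)) = ts := rfl
      rw [heq, dif_pos hu]
  have hneq : Term.realize v' s ≠ Term.realize v' t := by
    rw [key s hs, key t ht]
    intro hcontra
    exact h (congrArg Subtype.val hcontra)
  obtain ⟨n, ⟨e⟩⟩ := Finite.exists_equiv_fin F'
  refine ⟨Fin n, inferInstance, Equiv.inducedStructure e, e ∘ v', ?_⟩
  letI : L.Structure (Fin n) := Equiv.inducedStructure e
  let g := @Equiv.inducedStructureEquiv L F' (Fin n) iS' e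
  intro hcontra
  apply hneq
  apply g.injective
  have h1 : Term.realize (⇑g ∘ v') s = g (Term.realize v' s) := HomClass.realize_term g
  have h2 : Term.realize (⇑g ∘ v') t = g (Term.realize v' t) := HomClass.realize_term g
  rw [← h1, ← h2]
  have hge : ⇑g = ⇑e := rfl
  rw [hge]
  exact hcontra
end

section
/- Let X be a topological space that is Hausdorff, locally compact, paracompact and totally disconnected. Then the Čech–Stone compactification StoneCech X is totally disconnected (and hence, being compact Hausdorff, is a Stone space). -/
/-!
A locally compact paracompact Hausdorff space has a locally finite cover by compact sets, and
since the space is zero-dimensional each of these can be fattened to a compact clopen set with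
the family still locally finite. Separating two disjoint closed sets inside each member of that
cover and taking the (locally finite, hence closed) union shows that disjoint closed subsets of
`X` are separated by clopen sets. Such a clopen set extends, through its `Bool`-valued
indicator, to a clopen subset of `StoneCech X`, and these separate the points of
`StoneCech X`.
-/

open Set Filter Topology TopologicalSpace

section ClopenSeparation

variable {X : Type*} [TopologicalSpace X]

theorem IsCompact.exists_isClopen_between (hB : IsTopologicalBasis {s : Set X | IsClopen s})
    {K U : Set X} (hK : IsCompact K) (hU : IsOpen U) (hKU : K ⊆ U) :
    ∃ V, IsClopen V ∧ K ⊆ V ∧ V ⊆ U := by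
  choose! V hV hxV hVU using fun x (hx : x ∈ K) => hB.mem_nhds_iff.1 (hU.mem_nhds (hKU hx))
  obtain ⟨t, htK, hKt⟩ :=
    hK.elim_nhds_subcover V fun x hx => (hV x hx).isOpen.mem_nhds (hxV x hx)
  exact ⟨⋃ x ∈ t, V x, isClopen_biUnion_finset fun x hx => hV x (htK x hx), hKt,
    iUnion₂_subset fun x hx => hVU x (htK x hx)⟩

variable [T2Space X] [LocallyCompactSpace X] [ParacompactSpace X] [TotallyDisconnectedSpace X]

theorem exists_locallyFinite_isCompact_isClopen_cover :
    ∃ W : X → Set X, LocallyFinite W ∧ (∀ i, IsCompact (W i)) ∧ (∀ i, IsClopen (W i)) ∧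
      ⋃ i, W i = univ := by
  choose K hK hxK using fun x : X => exists_compact_mem_nhds x
  obtain ⟨u, hu, huU, hulf, huK⟩ := precise_refinement (fun x => interior (K x))
    (fun _ => isOpen_interior)
    (iUnion_eq_univ_iff.2 fun x => ⟨x, mem_interior_iff_mem_nhds.2 (hxK x)⟩)
  have huK' : ∀ i, u i ⊆ K i := fun i => (huK i).trans interior_subset
  obtain ⟨w, hwU, hw, hwu⟩ := exists_iUnion_eq_closed_subset hu hulf.point_finite huU
  choose W hW hwW hWu using fun i =>
    ((hK i).of_isClosed_subset (hw i) ((hwu i).trans (huK' i))).exists_isClopen_between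
      loc_compact_Haus_tot_disc_of_zero_dim (hu i) (hwu i)
  exact ⟨W, hulf.subset hWu, fun i => (hK i).of_isClosed_subset (hW i).isClosed
    ((hWu i).trans (huK' i)), hW, univ_subset_iff.1 (hwU ▸ iUnion_mono hwW)⟩

theorem exists_isClopen_superset_disjoint {C D : Set X} (hC : IsClosed C) (hD : IsClosed D)
    (hCD : Disjoint C D) : ∃ B, IsClopen B ∧ C ⊆ B ∧ Disjoint B D := by
  obtain ⟨W, hWlf, hWc, hW, hWU⟩ := exists_locallyFinite_isCompact_isClopen_cover (X := X)
  choose B hB hCB hBW using fun i => ((hWc i).inter_left hC).exists_isClopen_between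
    loc_compact_Haus_tot_disc_of_zero_dim ((hW i).isOpen.sdiff hD)
    (subset_sdiff.2 ⟨inter_subset_right, hCD.mono_left inter_subset_left⟩)
  have hBlf : LocallyFinite B := hWlf.subset fun i => (hBW i).trans sdiff_subset
  refine ⟨⋃ i, B i, ⟨hBlf.isClosed_iUnion fun i => (hB i).isClosed,
    isOpen_iUnion fun i => (hB i).isOpen⟩, fun x hx => ?_,
    disjoint_iUnion_left.2 fun i => (subset_sdiff.1 (hBW i)).2⟩
  obtain ⟨i, hi⟩ := mem_iUnion.1 (hWU ▸ mem_univ x)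
  exact mem_iUnion.2 ⟨i, hCB i ⟨hx, hi⟩⟩

end ClopenSeparation

theorem DenseRange.apply_eq_of_forall_mem_nhds {α β γ : Type*} [TopologicalSpace β]
    [TopologicalSpace γ] [T1Space γ] {f : α → β} (hf : DenseRange f) {g : β → γ} {x : β}
    (hg : ContinuousAt g x) {N : Set β} (hN : N ∈ 𝓝 x) {c : γ}
    (h : ∀ a, f a ∈ N → g (f a) = c) : g x = c := by
  by_contra hne
  obtain ⟨a, hac, haN⟩ := hf.mem_nhds (inter_mem (hg (compl_singleton_mem_nhds hne)) hN)
  exact hac (h a haN)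

theorem StoneCech.totallySeparatedSpace_of_exists_isClopen {X : Type*} [TopologicalSpace X]
    (hsep : ∀ C D : Set X, IsClosed C → IsClosed D → Disjoint C D →
      ∃ B, IsClopen B ∧ C ⊆ B ∧ Disjoint B D) :
    TotallySeparatedSpace (StoneCech X) := by
  refine totallySeparatedSpace_iff_exists_isClopen.2 fun x y hxy => ?_
  obtain ⟨Nx, ⟨hNx, hNx_closed⟩, Ny, ⟨hNy, hNy_closed⟩, hN⟩ :=
    ((closed_nhds_basis x).disjoint_iff (closed_nhds_basis y)).1 (disjoint_nhds_nhds.2 hxy)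
  obtain ⟨B, hB, hCB, hBD⟩ := hsep _ _ (hNx_closed.preimage continuous_stoneCechUnit)
    (hNy_closed.preimage continuous_stoneCechUnit) (hN.preimage stoneCechUnit)
  have hind : Continuous B.boolIndicator := (continuous_boolIndicator_iff_isClopen B).2 hB
  set g := stoneCechExtend hind
  have hg : Continuous g := continuous_stoneCechExtend hind
  have hgB : ∀ a, g (stoneCechUnit a) = B.boolIndicator a :=
    congrFun (stoneCechExtend_extends hind)
  have hgx : g x = true := denseRange_stoneCechUnit.apply_eq_of_forall_mem_nhds
    hg.continuousAt hNx fun a ha =>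
      (hgB a).trans ((B.mem_iff_boolIndicator a).1 (hCB ha))
  have hgy : g y = false := denseRange_stoneCechUnit.apply_eq_of_forall_mem_nhds
    hg.continuousAt hNy fun a ha =>
      (hgB a).trans ((B.notMem_iff_boolIndicator a).1 (hBD.notMem_of_mem_right ha))
  exact ⟨g ⁻¹' {true}, (isClopen_discrete _).preimage hg, hgx, by simp [hgy]⟩

/-- The Čech–Stone compactification of a locally compact paracompact totally
disconnected Hausdorff space is totally disconnected (hence a Stone space). -/
theorem stoneCech_totallyDisconnected {X : Type*} [TopologicalSpace X] [T2Space X]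
    [LocallyCompactSpace X] [ParacompactSpace X] [TotallyDisconnectedSpace X] :
    TotallyDisconnectedSpace (StoneCech X) :=
  have := StoneCech.totallySeparatedSpace_of_exists_isClopen fun _ _ hC hD hCD =>
    exists_isClopen_superset_disjoint (X := X) hC hD hCD
  inferInstance
end

section
/- Let n : ℕ, let S : Fin n → Type, and for each i let B i be a Boolean subalgebra of Set (S i). Let P be an element of the sum ⊕_i B i, i.e., P belongs to the Boolean subalgebra of Set (∀ i, S i) generated by the parallelepipeds. For each i define the relation ρ_i on S i by: ρ_i a b iff for every x : ∀ j, S j, (Function.update x i a ∈ P ↔ Function.update x i b ∈ P). Then: (a) each ρ_i is an equivalence relation with only finitely many equivalence classes; (b) for every a ∈ S i the class {b | ρ_i a b} belongs to B i; and (c) P = ⋃ over s ∈ P of the sets {x | ∀ i, ρ_i (s i) (x i)}. -/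
/-!
A box `{x | ∀ i, x i ∈ L i}` is saturated for the relations `a ∈ L i ↔ b ∈ L i` on the
coordinates, each of which has two classes, both in `B i`. Saturation for coordinatewise
equivalences with finitely many classes in the `B i` survives complements and intersections
(meet the relations), so every `P ∈ ⊕ᵢ Bᵢ` is saturated for such relations `r i`. Saturation
gives `r i ≤ ρ_i`, so every `ρ_i`-class is a finite union of `r i`-classes. Finally, as there
are finitely many coordinates, `ρ`-equivalent points are joined by changing one coordinate at a
time, which yields the decomposition of `P`.
-/

/-- A Boolean subalgebra of a Boolean algebra `α`: a set of elements closed under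
the Boolean operations. -/
structure BoolSubalg (α : Type*) [BooleanAlgebra α] where
  carrier : Set α
  bot_mem : ⊥ ∈ carrier
  top_mem : ⊤ ∈ carrier
  sup_mem : ∀ ⦃a⦄, a ∈ carrier → ∀ ⦃b⦄, b ∈ carrier → a ⊔ b ∈ carrier
  inf_mem : ∀ ⦃a⦄, a ∈ carrier → ∀ ⦃b⦄, b ∈ carrier → a ⊓ b ∈ carrier
  compl_mem : ∀ ⦃a⦄, a ∈ carrier → aᶜ ∈ carrier

/-- The infimum (intersection) of a family of Boolean subalgebras. -/
def BoolSubalg.iInf {α : Type*} [BooleanAlgebra α] {J : Type*} (B : J → BoolSubalg α) :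
    BoolSubalg α where
  carrier := ⋂ j, (B j).carrier
  bot_mem := Set.mem_iInter.2 fun j => (B j).bot_mem
  top_mem := Set.mem_iInter.2 fun j => (B j).top_mem
  sup_mem := fun a ha b hb => Set.mem_iInter.2 fun j =>
    (B j).sup_mem (Set.mem_iInter.1 ha j) (Set.mem_iInter.1 hb j)
  inf_mem := fun a ha b hb => Set.mem_iInter.2 fun j =>
    (B j).inf_mem (Set.mem_iInter.1 ha j) (Set.mem_iInter.1 hb j)
  compl_mem := fun a ha => Set.mem_iInter.2 fun j =>
    (B j).compl_mem (Set.mem_iInter.1 ha j)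

/-- The Boolean subalgebra generated by a set `s`. -/
def BoolSubalg.gen {α : Type*} [BooleanAlgebra α] (s : Set α) : BoolSubalg α :=
  BoolSubalg.iInf (J := {B : BoolSubalg α // s ⊆ B.carrier}) fun B => B.1

/-- The sum `⊕ᵢ Bᵢ` of Boolean algebras of sets: the Boolean subalgebra of
`Set (∀ i, S i)` generated by the parallelepipeds `{x | ∀ i, x i ∈ L i}` with
`L i ∈ B i`. -/
def boolSum {n : ℕ} {S : Fin n → Type*} (B : ∀ i, BoolSubalg (Set (S i))) :
    BoolSubalg (Set (∀ i, S i)) :=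
  BoolSubalg.gen {P | ∃ L : ∀ i, Set (S i), (∀ i, L i ∈ (B i).carrier) ∧
    P = {x | ∀ i, x i ∈ L i}}

/-- The canonical equivalence relation `ρ_i` on `S i` associated to a set
`P ⊆ ∀ i, S i`. -/
def rho {n : ℕ} {S : Fin n → Type*} (P : Set (∀ i, S i)) (i : Fin n) (a b : S i) :
    Prop :=
  ∀ x : ∀ j, S j, Function.update x i a ∈ P ↔ Function.update x i b ∈ P

namespace BoolSubalg

variable {α : Type*}

theorem gen_subset [BooleanAlgebra α] {s : Set α} {A : BoolSubalg α} (h : s ⊆ A.carrier) :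
    (gen s).carrier ⊆ A.carrier :=
  fun _ ha => Set.mem_iInter.1 ha ⟨A, h⟩

theorem sUnion_mem (A : BoolSubalg (Set α)) {𝒞 : Set (Set α)} (h𝒞 : 𝒞.Finite)
    (hA : 𝒞 ⊆ A.carrier) : ⋃₀ 𝒞 ∈ A.carrier := by
  induction 𝒞, h𝒞 using Set.Finite.induction_on with
  | empty => simpa using A.bot_mem
  | @insert C 𝒞 _ _ ih =>
    rw [Set.sUnion_insert]
    exact A.sup_mem (hA (Set.mem_insert C 𝒞)) (ih ((Set.subset_insert C 𝒞).trans hA))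

end BoolSubalg

def HasFiniteClassesIn {α : Type*} (A : BoolSubalg (Set α)) (r : α → α → Prop) : Prop :=
  (Set.range fun a => {b | r a b}).Finite ∧ ∀ a, {b | r a b} ∈ A.carrier

namespace HasFiniteClassesIn

variable {α : Type*} {A : BoolSubalg (Set α)} {r s : α → α → Prop}

theorem mem_iff_mem {L : Set α} (hL : L ∈ A.carrier) :
    HasFiniteClassesIn A (fun a b => a ∈ L ↔ b ∈ L) := by
  have hclass : ∀ a, {b | a ∈ L ↔ b ∈ L} = L ∨ {b | a ∈ L ↔ b ∈ L} = Lᶜ := by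
    intro a
    by_cases ha : a ∈ L
    · exact Or.inl (by ext b; simp [ha])
    · exact Or.inr (by ext b; simp [ha])
  refine ⟨(Set.finite_singleton Lᶜ).insert L |>.subset ?_, fun a => ?_⟩
  · rintro _ ⟨a, rfl⟩
    exact hclass a
  · rcases hclass a with h | h <;> rw [h]
    exacts [hL, A.compl_mem hL]

theorem inf (hr : HasFiniteClassesIn A r) (hs : HasFiniteClassesIn A s) :
    HasFiniteClassesIn A (fun a b => r a b ∧ s a b) := by
  have hclass : ∀ a, {b | r a b ∧ s a b} = {b | r a b} ∩ {b | s a b} := fun _ => rfl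
  refine ⟨(hr.1.image2 (· ∩ ·) hs.1).subset ?_, fun a => ?_⟩
  · rintro _ ⟨a, rfl⟩
    exact ⟨_, ⟨a, rfl⟩, _, ⟨a, rfl⟩, rfl⟩
  · rw [hclass]
    exact A.inf_mem (hr.2 a) (hs.2 a)

theorem mono (hr : HasFiniteClassesIn A r) (hr_refl : ∀ a, r a a)
    (hs_trans : ∀ {a b c}, s a b → s b c → s a c) (hrs : ∀ a b, r a b → s a b) :
    HasFiniteClassesIn A s := by
  set 𝒞 := Set.range fun a => {b | r a b}
  have hclass : ∀ a, {b | s a b} = ⋃₀ {C ∈ 𝒞 | C ⊆ {b | s a b}} := by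
    intro a
    refine subset_antisymm (fun b hb => ⟨{c | r b c}, ⟨⟨b, rfl⟩, ?_⟩, hr_refl b⟩)
      (Set.sUnion_subset fun C hC => hC.2)
    exact fun c hc => hs_trans hb (hrs b c hc)
  refine ⟨(hr.1.finite_subsets.image Set.sUnion).subset ?_, fun a => ?_⟩
  · rintro _ ⟨a, rfl⟩
    exact ⟨_, Set.sep_subset _ _, (hclass a).symm⟩
  · rw [hclass]
    refine A.sUnion_mem (hr.1.subset (Set.sep_subset _ _)) ?_
    rintro _ ⟨⟨c, rfl⟩, -⟩
    exact hr.2 c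

end HasFiniteClassesIn

def IsFinitelyDetermined {ι : Type*} {S : ι → Type*} (B : ∀ i, BoolSubalg (Set (S i)))
    (P : Set (∀ i, S i)) : Prop :=
  ∃ r : ∀ i, S i → S i → Prop, (∀ i, Equivalence (r i)) ∧ (∀ i, HasFiniteClassesIn (B i) (r i)) ∧
    ∀ x y : ∀ i, S i, (∀ i, r i (x i) (y i)) → (x ∈ P ↔ y ∈ P)

namespace IsFinitelyDetermined

variable {ι : Type*} {S : ι → Type*} {B : ∀ i, BoolSubalg (Set (S i))} {P Q : Set (∀ i, S i)}

theorem box {L : ∀ i, Set (S i)} (hL : ∀ i, L i ∈ (B i).carrier) :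
    IsFinitelyDetermined B {x | ∀ i, x i ∈ L i} :=
  ⟨fun i a b => a ∈ L i ↔ b ∈ L i, fun _ => ⟨fun _ => Iff.rfl, Iff.symm, Iff.trans⟩,
    fun i => HasFiniteClassesIn.mem_iff_mem (hL i),
    fun _ _ hxy => forall_congr' hxy⟩

theorem univ : IsFinitelyDetermined B (Set.univ : Set (∀ i, S i)) := by
  simpa using box (B := B) (L := fun _ => Set.univ) fun i => (B i).top_mem

theorem compl (hP : IsFinitelyDetermined B P) : IsFinitelyDetermined B Pᶜ := by
  obtain ⟨r, hr, hr_fin, hP⟩ := hP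
  exact ⟨r, hr, hr_fin, fun x y hxy => not_congr (hP x y hxy)⟩

theorem inter (hP : IsFinitelyDetermined B P) (hQ : IsFinitelyDetermined B Q) :
    IsFinitelyDetermined B (P ∩ Q) := by
  obtain ⟨r, hr, hr_fin, hP⟩ := hP
  obtain ⟨s, hs, hs_fin, hQ⟩ := hQ
  refine ⟨fun i a b => r i a b ∧ s i a b, fun i => ?_, fun i => (hr_fin i).inf (hs_fin i),
    fun x y hxy => and_congr (hP x y fun i => (hxy i).1) (hQ x y fun i => (hxy i).2)⟩
  exact ⟨fun a => ⟨(hr i).refl a, (hs i).refl a⟩, fun h => ⟨(hr i).symm h.1, (hs i).symm h.2⟩,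
    fun h h' => ⟨(hr i).trans h.1 h'.1, (hs i).trans h.2 h'.2⟩⟩

theorem union (hP : IsFinitelyDetermined B P) (hQ : IsFinitelyDetermined B Q) :
    IsFinitelyDetermined B (P ∪ Q) := by
  have h := (hP.compl.inter hQ.compl).compl
  rwa [Set.compl_inter, compl_compl, compl_compl] at h

end IsFinitelyDetermined

def finitelyDeterminedSubalg {ι : Type*} {S : ι → Type*} (B : ∀ i, BoolSubalg (Set (S i))) :
    BoolSubalg (Set (∀ i, S i)) where
  carrier := {P | IsFinitelyDetermined B P}
  bot_mem := by simpa using IsFinitelyDetermined.univ.compl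
  top_mem := IsFinitelyDetermined.univ
  sup_mem := fun _ hP _ hQ => IsFinitelyDetermined.union hP hQ
  inf_mem := fun _ hP _ hQ => IsFinitelyDetermined.inter hP hQ
  compl_mem := fun _ hP => IsFinitelyDetermined.compl hP

theorem isFinitelyDetermined_of_mem_boolSum {n : ℕ} {S : Fin n → Type*}
    {B : ∀ i, BoolSubalg (Set (S i))} {P : Set (∀ i, S i)} (hP : P ∈ (boolSum B).carrier) :
    IsFinitelyDetermined B P := by
  refine BoolSubalg.gen_subset (A := finitelyDeterminedSubalg B) ?_ hP
  rintro _ ⟨L, hL, rfl⟩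
  exact IsFinitelyDetermined.box hL

section rho

variable {n : ℕ} {S : Fin n → Type*} (P : Set (∀ i, S i))

theorem rho_equivalence (i : Fin n) : Equivalence (rho P i) :=
  ⟨fun _ _ => Iff.rfl, fun h x => (h x).symm, fun h h' x => (h x).trans (h' x)⟩

theorem rho_of_saturated {r : ∀ i, S i → S i → Prop} (hr : ∀ i, ∀ a, r i a a)
    (hP : ∀ x y : ∀ i, S i, (∀ i, r i (x i) (y i)) → (x ∈ P ↔ y ∈ P))
    {i : Fin n} {a b : S i} (hab : r i a b) : rho P i a b := by
  intro x
  refine hP _ _ fun j => ?_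
  rcases eq_or_ne j i with rfl | hj
  · simpa using hab
  · simpa [Function.update_of_ne hj] using hr j (x j)

theorem mem_iff_of_forall_rho {s x : ∀ i, S i} (h : ∀ i, rho P i (s i) (x i)) :
    s ∈ P ↔ x ∈ P := by
  classical
  suffices ∀ T : Finset (Fin n), s ∈ P ↔ T.piecewise x s ∈ P by
    simpa using this Finset.univ
  intro T
  induction T using Finset.induction_on with
  | empty => simp
  | @insert i T hi ih =>
    rw [Finset.piecewise_insert, ih]
    have hfix : Function.update (T.piecewise x s) i (s i) = T.piecewise x s := by
      rw [Function.update_eq_self_iff, Finset.piecewise_eq_of_notMem _ _ _ hi]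
    simpa only [hfix] using h i (T.piecewise x s)

end rho

/-- For an element `P` of the sum `⊕ᵢ Bᵢ`, each `ρ_i` is an equivalence relation of
finite index whose classes lie in `Bᵢ`, and `P` is the union of the products of
`ρ`-classes of its elements. -/
theorem canonical_decomposition {n : ℕ} {S : Fin n → Type*}
    (B : ∀ i, BoolSubalg (Set (S i))) (P : Set (∀ i, S i))
    (hP : P ∈ (boolSum B).carrier) :
    (∀ i, Equivalence (rho P i)) ∧
    (∀ i, (Set.range fun a : S i => {b | rho P i a b}).Finite) ∧
    (∀ i, ∀ a : S i, {b | rho P i a b} ∈ (B i).carrier) ∧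
    P = ⋃ s ∈ P, {x | ∀ i, rho P i (s i) (x i)} := by
  obtain ⟨r, hr, hr_fin, hr_sat⟩ := isFinitelyDetermined_of_mem_boolSum hP
  have hrho_fin : ∀ i, HasFiniteClassesIn (B i) (rho P i) := fun i =>
    (hr_fin i).mono (hr i).refl (rho_equivalence P i).trans
      fun _ _ => rho_of_saturated P (fun j => (hr j).refl) hr_sat
  refine ⟨rho_equivalence P, fun i => (hrho_fin i).1, fun i => (hrho_fin i).2, ?_⟩
  ext x
  simp only [Set.mem_iUnion, Set.mem_ofPred_eq, exists_prop]
  exact ⟨fun hx => ⟨x, hx, fun i => (rho_equivalence P i).refl (x i)⟩,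
    fun ⟨s, hs, hsx⟩ => (mem_iff_of_forall_rho P hsx).1 hs⟩
end
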